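/- arXiv:1612.08136 — 9 statements merged into one kernel-verified Lean document; each statement's English description precedes it below -/
import Mathlib

section
/- Let G be a simple graph, r ≥ 1 an integer, and a₁,…,a_r positive integers. If G → (a₁,…,a_r)^v, then the chromatic number of G satisfies χ(G) ≥ 1 + Σ_{i=1}^{r} (a_i − 1). -/
/-- `G → (a₁,…,a_r)ᵛ`: for every coloring of the vertices of `G` with `r` colors,
there is a color `i` and a clique of `G` on `a i` vertices all of whose vertices
receive color `i`. -/
def VArrows {V : Type*} {r : ℕ} (G : SimpleGraph V) (a : Fin r → ℕ) : Prop :=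
  ∀ c : V → Fin r, ∃ i : Fin r, ∃ t : Finset V,
    G.IsNClique (a i) t ∧ ∀ v ∈ t, c v = i

lemma sigma_fin_ext {r : ℕ} {m : Fin r → ℕ} {x y : Σ i : Fin r, Fin (m i)}
    (h1 : x.1 = y.1) (h2 : (x.2 : ℕ) = (y.2 : ℕ)) : x = y := by
  obtain ⟨i, xi⟩ := x
  obtain ⟨j, yj⟩ := y
  dsimp at h1
  subst h1
  simp_all [Fin.ext_iff]

lemma not_colorable_of_vArrows {V : Type*} {r : ℕ} (G : SimpleGraph V)
    (a : Fin r → ℕ) (ha : ∀ i, 1 ≤ a i) (hG : VArrows G a) {n : ℕ}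
    (hn : n ≤ ∑ i, (a i - 1)) : ¬ G.Colorable n := by
  classical
  rintro ⟨C⟩
  set S : ℕ := ∑ i, (a i - 1) with hS
  have e : Fin S ≃ Σ i : Fin r, Fin (a i - 1) :=
    Fintype.equivOfCardEq (by simp [hS])
  obtain ⟨i, t, hclique, hmono⟩ := hG (fun v => (e (Fin.castLE hn (C v))).1)
  have hinj : Set.InjOn (fun v => ((e (Fin.castLE hn (C v))).2 : ℕ)) t := by
    intro v hv w hw hvw
    by_contra hne
    have hadj : G.Adj v w := hclique.1 hv hw hne
    have hCne : C v ≠ C w := C.valid hadj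
    apply hCne
    have h1 := hmono v hv
    have h2 := hmono w hw
    simp only at h1 h2 hvw
    have : e (Fin.castLE hn (C v)) = e (Fin.castLE hn (C w)) :=
      sigma_fin_ext (h1.trans h2.symm) hvw
    exact Fin.castLE_injective hn (e.injective this)
  have hsub : t.image (fun v => ((e (Fin.castLE hn (C v))).2 : ℕ)) ⊆
      Finset.range (a i - 1) := by
    intro x hx
    simp only [Finset.mem_image] at hx
    obtain ⟨v, hv, rfl⟩ := hx
    have h1 := hmono v hv
    have := (e (Fin.castLE hn (C v))).2.isLt
    rw [Finset.mem_range, ← h1]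
    exact this
  have hcard : t.card ≤ a i - 1 := by
    calc t.card = (t.image (fun v => ((e (Fin.castLE hn (C v))).2 : ℕ))).card :=
          (Finset.card_image_of_injOn hinj).symm
      _ ≤ (Finset.range (a i - 1)).card := Finset.card_le_card hsub
      _ = a i - 1 := Finset.card_range _
  rw [hclique.2] at hcard
  have := ha i
  omega

/-- If `G → (a₁,…,a_r)ᵛ`, then `χ(G) ≥ 1 + ∑ᵢ (aᵢ - 1)`. -/
theorem stmt_2 {V : Type*} [Fintype V] (G : SimpleGraph V) (r : ℕ) (hr : 1 ≤ r)
    (a : Fin r → ℕ) (ha : ∀ i, 1 ≤ a i) (hG : VArrows G a) :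
    ((1 + ∑ i, (a i - 1) : ℕ) : ℕ∞) ≤ G.chromaticNumber := by
  by_contra hlt
  push_neg at hlt
  have hm : G.Colorable (ENat.toNat G.chromaticNumber) :=
    G.colorable_chromaticNumber_of_fintype
  have hne : G.chromaticNumber ≠ ⊤ := by
    intro h
    rw [h] at hlt
    exact (not_top_lt hlt)
  have heq : (G.chromaticNumber.toNat : ℕ∞) = G.chromaticNumber := ENat.coe_toNat hne
  rw [← heq, Nat.cast_lt] at hlt
  exact not_colorable_of_vArrows G a ha hG (by omega) hm
end

section
/- Let s ≥ 3 be an integer and suppose H is a K_s-free simple graph on h vertices with H → (s−1, s−1)^v and χ(H) = 2s−3. Then there exists a K_{s+1}-free simple graph G on exactly 1 + s + s·h vertices with G → (s, s)^v and χ(G) = 2s−1. (Hence F^χ(2, s, s+1) ≤ 1 + s + s·F^χ(2, s−1, s).) -/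
/-!
Take `s` disjoint copies `H₁, …, H_s` of `H`, a clique on `s` hubs `w₁, …, w_s` with `w_i`
joined to all of `H_i`, and an apex `u` joined to every copy vertex but to no hub.
A clique meets at most one copy, and then contains at most one of `u`, `w_i`; so it has at most
`s` vertices. In a 2-coloring each `H_i` contains a monochromatic `K_{s-1}`; if its color is
that of `u` or of `w_i`, that vertex completes a monochromatic `K_s`, and otherwise all hubs
have the color of `u` and form one. Coloring `u` with a new color, `w_i` with color `i` and
`H_i` with `2s-3` colors other than `i` uses `2s-1` colors. In a `(2s-2)`-coloring a hub colored
differently from `u` would leave only `2s-4` colors for its copy, so all hubs get the color of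
`u`, which is impossible as they are pairwise adjacent.
-/

open Finset SimpleGraph

theorem Matrix.vecCons_self_pair_apply {γ : Type*} (a : γ) (k : Fin 2) : ![a, a] k = a := by
  fin_cases k <;> rfl

namespace SimpleGraph

variable {α β : Type*} {G : SimpleGraph α} {H : SimpleGraph β} {n : ℕ}

theorem IsNClique.map_copy {t : Finset α} (ht : G.IsNClique n t) (f : Copy G H) :
    H.IsNClique n (t.map f.toEmbedding) :=
  (ht.map (f := f.toEmbedding)).mono <|
    (map_le_iff_le_comap f.toEmbedding G H).2 fun _ _ hxy => f.toHom.map_adj hxy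

theorem IsClique.card_lt_of_cliqueFree {t : Finset α} (ht : G.IsClique (t : Set α))
    (hG : G.CliqueFree n) : #t < n := by
  by_contra! hn
  obtain ⟨u, hut, hu⟩ := exists_subset_card_eq hn
  exact hG u ⟨ht.subset hut, hu⟩

theorem Coloring.colorable_of_hom_of_notMem {k : ℕ} (C : H.Coloring (Fin k)) (f : G →g H)
    (S : Finset (Fin k)) (hS : ∀ x, C (f x) ∉ S) : G.Colorable (k - #S) := by
  let D : G.Coloring {a // a ∉ S} :=
    Coloring.mk (fun x => ⟨C (f x), hS x⟩) fun hxy heq => C.valid (f.map_adj hxy) congr(($heq).1)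
  simpa [Fintype.card_subtype_compl] using D.colorable

end SimpleGraph

theorem VArrows.of_isContained {α β : Type*} {G : SimpleGraph α} {H : SimpleGraph β} {r : ℕ}
    {a : Fin r → ℕ} (hGH : G ⊑ H) (hG : VArrows G a) : VArrows H a := by
  obtain ⟨f⟩ := hGH
  intro c
  obtain ⟨i, t, ht, htc⟩ := hG (c ∘ f)
  exact ⟨i, t.map f.toEmbedding, ht.map_copy f, forall_mem_map.2 htc⟩

namespace SimpleGraph

variable {β : Type*}

/-- The vertex `none` is the apex, `some (inl i)` the hub of row `i`, and `some (inr (i, x))`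
the copy of `x` in row `i`. -/
def folkmanExtension (s : ℕ) (H : SimpleGraph β) :
    SimpleGraph (Option (Fin s ⊕ Fin s × β)) where
  Adj u v := match u, v with
    | none, some (.inr _) | some (.inr _), none => True
    | some (.inl i), some (.inl j) => i ≠ j
    | some (.inl i), some (.inr (j, _)) | some (.inr (j, _)), some (.inl i) => i = j
    | some (.inr (i, x)), some (.inr (j, y)) => i = j ∧ H.Adj x y
    | _, _ => False
  symm := ⟨by
    rintro (_ | i | ⟨i, x⟩) (_ | j | ⟨j, y⟩) h <;> simp_all [eq_comm, H.adj_comm]⟩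
  loopless := ⟨by
    rintro (_ | i | ⟨i, x⟩) h <;> simp_all⟩

namespace folkmanExtension

variable {s : ℕ} (H : SimpleGraph β)

def copy (i : Fin s) : H ↪g folkmanExtension s H where
  toFun x := some (.inr (i, x))
  inj' _ _ h := by simpa using h
  map_rel_iff' := ⟨And.right, And.intro rfl⟩

def hub : (⊤ : SimpleGraph (Fin s)) ↪g folkmanExtension s H where
  toFun i := some (.inl i)
  inj' _ _ h := by simpa using h
  map_rel_iff' := Iff.rfl

variable {H}

@[simp] theorem copy_apply (i : Fin s) (x : β) : copy H i x = some (.inr (i, x)) := rfl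

@[simp] theorem hub_apply (i : Fin s) : hub H i = some (.inl i) := rfl

theorem apex_adj_copy (i : Fin s) (x : β) : (folkmanExtension s H).Adj none (copy H i x) :=
  trivial

theorem hub_adj_copy (i : Fin s) (x : β) : (folkmanExtension s H).Adj (hub H i) (copy H i x) :=
  rfl

theorem not_apex_adj_hub (i : Fin s) : ¬(folkmanExtension s H).Adj none (hub H i) := id

theorem eq_apex_or_eq_hub_or_eq_copy_of_adj_copy {i : Fin s} {x : β} {v}
    (hv : (folkmanExtension s H).Adj v (copy H i x)) :
    v = none ∨ v = hub H i ∨ ∃ y, v = copy H i y := by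
  rcases v with _ | j | ⟨j, y⟩
  · exact .inl rfl
  · exact .inr (.inl (hv ▸ rfl))
  · exact .inr (.inr ⟨y, hv.1 ▸ rfl⟩)

section CliqueFree

variable {t : Finset (Option (Fin s ⊕ Fin s × β))}

theorem card_le_of_isClique_of_copy_mem (hH : H.CliqueFree s)
    (ht : (folkmanExtension s H).IsClique (t : Set _)) {i : Fin s} {x : β}
    (hx : copy H i x ∈ t) : #t ≤ s := by
  classical
  set S := t.preimage (copy H i) (copy H i).injective.injOn
  have hS : H.IsClique (S : Set β) := fun y hy z hz hyz =>
    (copy H i).map_adj_iff.1 (ht (by simpa [S] using hy) (by simpa [S] using hz)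
      ((copy H i).injective.ne hyz))
  have hsub : t ⊆ insert (if none ∈ t then none else hub H i) (S.map (copy H i).toEmbedding) := by
    intro v hv
    obtain rfl | rfl | ⟨y, rfl⟩ : v = none ∨ v = hub H i ∨ ∃ y, v = copy H i y := by
      by_cases hvx : v = copy H i x
      · exact .inr (.inr ⟨x, hvx⟩)
      · exact eq_apex_or_eq_hub_or_eq_copy_of_adj_copy (ht hv hx hvx)
    · simp [hv]
    · have : none ∉ t := fun h0 => not_apex_adj_hub i (ht h0 hv (by simp))
      simp [this]
    · simpa [S] using hv
  calc #t ≤ #S + 1 := (card_le_card hsub).trans (card_insert_le _ _) |>.trans (by simp)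
    _ ≤ s := hS.card_lt_of_cliqueFree hH

theorem card_le_of_isClique_of_forall_copy_notMem (hs : 0 < s)
    (ht : (folkmanExtension s H).IsClique (t : Set _)) (hcopy : ∀ i x, copy H i x ∉ t) :
    #t ≤ s := by
  by_cases h0 : none ∈ t
  · have : t ⊆ {none} := by
      rintro (_ | i | ⟨i, x⟩) hv
      · simp
      · exact absurd (ht h0 hv (by simp)) (not_apex_adj_hub i)
      · exact absurd hv (hcopy i x)
    exact (card_le_card this).trans (by rw [card_singleton]; exact hs)
  · have : t ⊆ univ.map (hub H).toEmbedding := by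
      rintro (_ | i | ⟨i, x⟩) hv
      · exact absurd hv h0
      · simp
      · exact absurd hv (hcopy i x)
    simpa using card_le_card this

theorem card_le_of_isClique (hH : H.CliqueFree s)
    (ht : (folkmanExtension s H).IsClique (t : Set _)) : #t ≤ s := by
  by_cases hcopy : ∃ i x, copy H i x ∈ t
  · obtain ⟨i, x, hx⟩ := hcopy
    exact card_le_of_isClique_of_copy_mem hH ht hx
  · have hs : 0 < s := Nat.pos_of_ne_zero (by rintro rfl; exact not_cliqueFree_zero hH)
    exact card_le_of_isClique_of_forall_copy_notMem hs ht (by simpa using hcopy)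

end CliqueFree

theorem cliqueFree (hH : H.CliqueFree s) : (folkmanExtension s H).CliqueFree (s + 1) := by
  rintro t ⟨ht, hcard⟩
  have := card_le_of_isClique hH ht
  omega

theorem varrows (hH : VArrows H ![s - 1, s - 1]) : VArrows (folkmanExtension s H) ![s, s] := by
  classical
  intro c
  have hrow (i : Fin s) :
      ∃ k : Fin 2, ∃ t, H.IsNClique (s - 1) t ∧ ∀ x ∈ t, c (copy H i x) = k := by
    obtain ⟨k, t, ht, htc⟩ := hH (c ∘ copy H i)
    exact ⟨k, t, by rwa [Matrix.vecCons_self_pair_apply] at ht, htc⟩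
  choose k t ht htc using hrow
  have cone (i : Fin s) (v) (hv : ∀ x, (folkmanExtension s H).Adj v (copy H i x))
      (hvc : c v = k i) : ∃ j : Fin 2, ∃ u, (folkmanExtension s H).IsNClique (![s, s] j) u ∧
        ∀ w ∈ u, c w = j := by
    refine ⟨k i, insert v ((t i).map (copy H i).toCopy.toEmbedding), ?_, ?_⟩
    · rw [Matrix.vecCons_self_pair_apply]
      convert ((ht i).map_copy (copy H i).toCopy).insert (forall_mem_map.2 fun x _ => hv x)
        using 1
      exact (Nat.sub_add_cancel i.pos).symm
    · exact forall_mem_insert _ _ _ |>.2 ⟨hvc, forall_mem_map.2 (htc i)⟩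
  by_cases hapex : ∃ i, k i = c none
  · obtain ⟨i, hi⟩ := hapex
    exact cone i none (apex_adj_copy i) hi.symm
  by_cases hhub : ∃ i, c (hub H i) ≠ c none
  · obtain ⟨i, hi⟩ := hhub
    have : k i ≠ c none := fun h => hapex ⟨i, h⟩
    exact cone i _ (hub_adj_copy i) (by omega)
  simp only [not_exists, not_not] at hhub
  refine ⟨c none, univ.map (hub H).toCopy.toEmbedding, ?_, forall_mem_map.2 fun i _ => hhub i⟩
  rw [Matrix.vecCons_self_pair_apply]
  simpa using isNClique_map_copy_top (G := folkmanExtension s H) (hub H).toCopy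

theorem colorable {n : ℕ} (hsn : s ≤ n + 1) (hH : H.Colorable n) :
    (folkmanExtension s H).Colorable (n + 2) := by
  obtain ⟨C⟩ := hH
  let D : (folkmanExtension s H).Coloring (Option (Fin (n + 1))) := Coloring.mk
    (fun
      | none => none
      | some (.inl i) => some (Fin.castLE hsn i)
      | some (.inr (i, x)) => some ((Fin.castLE hsn i).succAbove (C x)))
    (by
      rintro (_ | i | ⟨i, x⟩) (_ | j | ⟨j, y⟩) h <;>
        simp_all [folkmanExtension, Fin.succAbove_ne, (Fin.succAbove_ne _ _).symm, C.valid])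
  simpa using D.colorable

theorem not_colorable {n : ℕ} (hs : 2 ≤ s) (hH : ¬H.Colorable n) :
    ¬(folkmanExtension s H).Colorable (n + 2) := by
  rintro ⟨C⟩
  have hhub (i : Fin s) : C (hub H i) = C none := by
    by_contra hne
    have hrow (x : β) : C (copy H i x) ∉ ({C (hub H i), C none} : Finset _) := by
      simp only [mem_insert, mem_singleton, not_or]
      exact ⟨(C.valid (hub_adj_copy i x)).symm, (C.valid (apex_adj_copy i x)).symm⟩
    have := C.colorable_of_hom_of_notMem (copy H i).toHom _ hrow
    rw [card_pair hne, Nat.add_sub_cancel] at this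
    exact hH this
  have hadj : (folkmanExtension s H).Adj (hub H ⟨0, by omega⟩) (hub H ⟨1, by omega⟩) :=
    (hub H).map_adj_iff.2 (by simp)
  exact C.valid hadj (by rw [hhub, hhub])

end folkmanExtension

end SimpleGraph

/-- If `H` is a `K_s`-free graph on `h` vertices with `H → (s-1, s-1)ᵛ` and
`χ(H) = 2s - 3`, then there is a `K_{s+1}`-free graph `G` on `1 + s + s·h` vertices
with `G → (s, s)ᵛ` and `χ(G) = 2s - 1`.
(Hence `F^χ(2, s, s+1) ≤ 1 + s + s·F^χ(2, s-1, s)`.) -/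
theorem stmt_3 (s h : ℕ) (hs : 3 ≤ s) (H : SimpleGraph (Fin h))
    (hHfree : H.CliqueFree s)
    (hHarr : VArrows H ![s - 1, s - 1])
    (hHchi : H.chromaticNumber = ((2 * s - 3 : ℕ) : ℕ∞)) :
    ∃ G : SimpleGraph (Fin (1 + s + s * h)),
      G.CliqueFree (s + 1) ∧ VArrows G ![s, s] ∧
      G.chromaticNumber = ((2 * s - 1 : ℕ) : ℕ∞) := by
  have hcard : Fintype.card (Option (Fin s ⊕ Fin s × Fin h)) = 1 + s + s * h := by
    simp only [Fintype.card_option, Fintype.card_sum, Fintype.card_prod, Fintype.card_fin]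
    ring
  let e := (folkmanExtension s H).overFinIso hcard
  obtain ⟨hHcol, hHncol⟩ : H.Colorable (2 * s - 4 + 1) ∧ ¬H.Colorable (2 * s - 4) := by
    rw [← chromaticNumber_eq_iff_colorable_not_colorable, hHchi, ← Nat.cast_add_one]
    congr 1
    omega
  refine ⟨_, (folkmanExtension.cliqueFree hHfree).comap e.isContained',
    VArrows.of_isContained e.isContained (folkmanExtension.varrows hHarr), ?_⟩
  rw [← chromaticNumber_congr e, show 2 * s - 1 = 2 * s - 2 + 1 by omega, Nat.cast_add_one,
    chromaticNumber_eq_iff_colorable_not_colorable, show 2 * s - 2 = 2 * s - 4 + 2 by omega]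
  exact ⟨(folkmanExtension.colorable (by omega) hHcol).mono (by omega),
    folkmanExtension.not_colorable (by omega) hHncol⟩
end

section
/- Let r ≥ 2 and s ≥ 3 be integers, and set b_i = i(s−1)+1 for 1 ≤ i ≤ r−1 and B = Π_{i=1}^{r−1} b_i. Suppose that for each i with 2 ≤ i ≤ r−1 there is a K_{s+1}-free simple graph G_i on n_i vertices with G_i → (s,…,s)^v (i colors) and χ(G_i) = i(s−1)+1, and that there is a K_s-free simple graph H on h vertices with H → (s−1,…,s−1)^v (r colors) and χ(H) = r(s−2)+1. Then there exists a K_{s+1}-free simple graph G on exactly 1 + s + Σ_{i=2}^{r−1} n_i + B·h vertices with G → (s,…,s)^v (r colors) and χ(G) = r(s−1)+1. (Hence F^χ(r, s, s+1) ≤ 1 + s + Σ_{i=2}^{r−1} F^χ(i,s,s+1) + B·F^χ(r,s−1,s).) -/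
/-!
Let `Γ₁ = K_s` and `Γᵢ = Gᵢ` for `2 ≤ i ≤ r-1`, each properly coloured with `bᵢ` colours. The
graph consists of an apex, the disjoint union of the `Γᵢ`, and a copy `H_t` of `H` for every
choice `t` of one colour class in each `Γᵢ`, joined to the apex and to the chosen classes. The
apex and the chosen classes are pairwise non-adjacent, so a clique meeting `H_t` has at most one
vertex outside it, and the graph is `K_{s+1}`-free. Given an `r`-colouring with no monochromatic
`K_s` inside the `Γᵢ`, the piece `Γᵢ` shows at least `i + 1` colours, so by Hall's theorem the
pieces contain vertices of `r - 1` distinct colours, all different from the colour of the apex;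
for `t` the classes of these vertices, every colour is present next to `H_t`, and the
monochromatic `K_{s-1}` in `H_t` extends to a `K_s`. Colouring `H_t` with colours avoiding the at
most `r` colours of the apex and of `t` gives an `r(s-1)+1`-colouring, and `G → (s,…,s)ᵛ` rules
out `r(s-1)` colours.
-/

open Finset SimpleGraph

section

variable {V W : Type*} {G : SimpleGraph V} {H : SimpleGraph W}

theorem SimpleGraph.Embedding.isNClique_map (f : G ↪g H) {n : ℕ} {t : Finset V}
    (h : G.IsNClique n t) : H.IsNClique n (t.map f.toEmbedding) :=
  h.map.mono (by rw [map_le_iff_le_comap]; exact f.comap_eq.ge)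

theorem SimpleGraph.Embedding.not_cliqueFree_of_isClique (f : H ↪g G) {t : Finset V}
    (ht : G.IsClique (t : Set V)) (hrange : ∀ x ∈ t, x ∈ Set.range f) :
    ¬ H.CliqueFree #t := by
  classical
  set u := t.preimage f f.injective.injOn
  have hu : H.IsClique (u : Set W) := fun x hx y hy hxy =>
    f.map_adj_iff.mp (ht (by simpa [u] using hx) (by simpa [u] using hy) (f.injective.ne hxy))
  have hcard : #u = #t := by rw [card_preimage, filter_true_of_mem hrange]
  exact hcard ▸ (⟨hu, rfl⟩ : H.IsNClique #u u).not_cliqueFree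

theorem VArrows.of_embedding {r : ℕ} {a : Fin r → ℕ} (f : G ↪g H) (h : VArrows G a) :
    VArrows H a := fun c =>
  let ⟨i, t, ht, hti⟩ := h (c ∘ f)
  ⟨i, t.map f.toEmbedding, f.isNClique_map ht, by simpa using hti⟩

theorem VArrows.exists_isNClique_or_lt_card_image [Fintype V] {β : Type*} [DecidableEq β]
    {p s : ℕ} (h : VArrows G (fun _ : Fin p => s)) (hs : s ≠ 0) (c : V → β) :
    (∃ i t, G.IsNClique s t ∧ ∀ v ∈ t, c v = i) ∨ p < #(univ.image c) := by
  refine or_iff_not_imp_right.mpr fun hle => ?_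
  obtain ⟨e⟩ : Nonempty (univ.image c ↪ Fin p) :=
    Function.Embedding.nonempty_of_card_le (by simpa using hle)
  obtain ⟨i, t, ht, hti⟩ := h fun v => e ⟨c v, mem_image_of_mem c (mem_univ v)⟩
  obtain ⟨v₀, hv₀⟩ := card_pos.mp (ht.card_eq.trans_gt (Nat.pos_of_ne_zero hs))
  exact ⟨c v₀, t, ht, fun v hv =>
    congrArg Subtype.val (e.injective ((hti v hv).trans (hti v₀ hv₀).symm))⟩

theorem VArrows.not_colorable {r s : ℕ} (h : VArrows G (fun _ : Fin r => s)) (hs : s ≠ 0) :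
    ¬ G.Colorable (r * (s - 1)) := by
  rintro ⟨C⟩
  set pair := fun v => finProdFinEquiv.symm (C v)
  obtain ⟨i, t, ht, hti⟩ := h fun v => (pair v).1
  obtain ⟨u, hu, v, hv, huv, heq⟩ := exists_ne_map_eq_of_card_lt_of_maps_to (t := univ)
    (f := fun v => (pair v).2)
    (by
      rw [card_univ, Fintype.card_fin, ht.card_eq]
      exact Nat.sub_lt (Nat.pos_of_ne_zero hs) one_pos)
    (fun _ _ => mem_univ _)
  exact C.valid (ht.isClique hu hv huv)
    (finProdFinEquiv.symm.injective (Prod.ext ((hti u hu).trans (hti v hv).symm) heq))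

theorem Fin.exists_injective_mem_of_le_card {α : Type*} [DecidableEq α] {q : ℕ}
    (t : Fin q → Finset α) (ht : ∀ k, k.1 + 1 ≤ #(t k)) :
    ∃ f : Fin q → α, Function.Injective f ∧ ∀ k, f k ∈ t k := by
  refine (all_card_le_biUnion_card_iff_exists_injective t).mp fun S => ?_
  rcases S.eq_empty_or_nonempty with rfl | hS
  · simp
  calc #S ≤ #(Iic (S.max' hS)) := card_le_card fun k hk => mem_Iic.mpr (S.le_max' k hk)
    _ = S.max' hS + 1 := Fin.card_Iic _
    _ ≤ #(t (S.max' hS)) := ht _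
    _ ≤ #(S.biUnion t) := card_le_card (subset_biUnion_of_mem t (S.max'_mem hS))

theorem Fin.eq_or_exists_eq_of_injective {q r : ℕ} {d : Fin q → Fin r}
    (hd : Function.Injective d) {a : Fin r} (ha : ∀ k, d k ≠ a) (hr : r ≤ q + 1) (j : Fin r) :
    j = a ∨ ∃ k, d k = j := by
  have hcover : insert a (univ.image d) = univ := by
    refine eq_univ_of_card _ (le_antisymm (card_le_univ _) ?_)
    rw [card_insert_of_notMem (by simpa using fun k => ha k), card_image_of_injective _ hd]
    simpa using hr
  have hj : j ∈ insert a (univ.image d) := hcover ▸ mem_univ j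
  simpa [eq_comm] using hj

@[to_additive]
theorem Fin.prod_univ_val_succ_eq_prod_Icc {M : Type*} [CommMonoid M] (f : ℕ → M) (q : ℕ) :
    ∏ k : Fin q, f (k + 1) = ∏ i ∈ Icc 1 q, f i := by
  rw [Fin.prod_univ_eq_prod_range (fun k => f (k + 1)), range_eq_Ico, prod_Ico_add', zero_add,
    Ico_add_one_right_eq_Icc]

end

section TransversalJoin

variable {ι W : Type*} {V α : ι → Type*} {Γ : ∀ k, SimpleGraph (V k)}

/-- `inl ()` is the apex, `inr (inl ⟨k, u⟩)` the vertex `u` of `Γ k`, and `inr (inr (t, w))`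
the vertex `w` of the copy of `H` indexed by `t`; that copy is joined to the apex and to the
colour classes `C k ⁻¹' {t k}`. -/
def transversalJoin (C : ∀ k, (Γ k).Coloring (α k)) (H : SimpleGraph W) :
    SimpleGraph (Unit ⊕ (Σ k, V k) ⊕ ((∀ k, α k) × W)) where
  Adj
    | .inl _, .inr (.inr _) | .inr (.inr _), .inl _ => True
    | .inr (.inl ⟨k, u⟩), .inr (.inl ⟨l, v⟩) => ∃ h : k = l, (Γ l).Adj (h ▸ u) v
    | .inr (.inl ⟨k, u⟩), .inr (.inr (t, _)) | .inr (.inr (t, _)), .inr (.inl ⟨k, u⟩) =>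
      t k = C k u
    | .inr (.inr (t, w)), .inr (.inr (t', w')) => t = t' ∧ H.Adj w w'
    | _, _ => False
  symm := by
    constructor
    rintro (_ | ⟨k, u⟩ | ⟨t, w⟩) (_ | ⟨l, v⟩ | ⟨t', w'⟩) h <;> simp only at h ⊢
    · obtain ⟨rfl, h⟩ := h
      exact ⟨rfl, h.symm⟩
    · exact h
    · exact h
    · exact ⟨h.1.symm, h.2.symm⟩
  loopless := by
    constructor
    rintro (_ | ⟨k, u⟩ | ⟨t, w⟩) h <;> simp only at h
    · exact (Γ k).irrefl h.2
    · exact H.irrefl h.2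

namespace transversalJoin

variable (C : ∀ k, (Γ k).Coloring (α k)) (H : SimpleGraph W)

def coreEmbedding (k : ι) : Γ k ↪g transversalJoin C H where
  toFun u := .inr (.inl ⟨k, u⟩)
  inj' _ _ h := by simpa using h
  map_rel_iff' := ⟨fun ⟨_, h⟩ => h, fun h => ⟨rfl, h⟩⟩

def copyEmbedding (t : ∀ k, α k) : H ↪g transversalJoin C H where
  toFun w := .inr (.inr (t, w))
  inj' _ _ h := by simpa using h
  map_rel_iff' := ⟨And.right, fun h => ⟨rfl, h⟩⟩

variable {C H}

theorem exists_eq_copy_of_adj_apex {y} (h : (transversalJoin C H).Adj (.inl ()) y) :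
    ∃ t w, y = copyEmbedding C H t w := by
  rcases y with _ | _ | ⟨t, w⟩
  iterate 2 exact h.elim
  exact ⟨t, w, rfl⟩

theorem exists_eq_core_or_copy_of_adj_core {k : ι} {u : V k} {y}
    (h : (transversalJoin C H).Adj (coreEmbedding C H k u) y) :
    (∃ v, y = coreEmbedding C H k v) ∨ ∃ t w, y = copyEmbedding C H t w := by
  rcases y with _ | ⟨l, v⟩ | ⟨t, w⟩
  · exact h.elim
  · obtain ⟨rfl, -⟩ := h
    exact .inl ⟨v, rfl⟩
  · exact .inr ⟨t, w, rfl⟩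

theorem eq_apex_or_exists_eq_core_of_adj_copy {t : ∀ k, α k} {w : W} {x}
    (h : (transversalJoin C H).Adj x (copyEmbedding C H t w))
    (hx : x ∉ Set.range (copyEmbedding C H t)) :
    x = Sum.inl () ∨ ∃ k u, x = coreEmbedding C H k u ∧ t k = C k u := by
  rcases x with _ | ⟨k, u⟩ | ⟨t', w'⟩
  · exact .inl rfl
  · exact .inr ⟨k, u, rfl, h⟩
  · exact (hx ⟨w', by rw [h.1]; rfl⟩).elim

theorem not_adj_of_adj_copy {t : ∀ k, α k} {w : W} {x y}
    (hx : (transversalJoin C H).Adj x (copyEmbedding C H t w))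
    (hy : (transversalJoin C H).Adj y (copyEmbedding C H t w))
    (hx' : x ∉ Set.range (copyEmbedding C H t)) (hy' : y ∉ Set.range (copyEmbedding C H t)) :
    ¬ (transversalJoin C H).Adj x y := by
  rcases eq_apex_or_exists_eq_core_of_adj_copy hx hx' with rfl | ⟨k, u, rfl, hu⟩ <;>
    rcases eq_apex_or_exists_eq_core_of_adj_copy hy hy' with rfl | ⟨l, v, rfl, hv⟩
  iterate 3 exact id
  rintro ⟨rfl, hadj⟩
  exact (C k).valid hadj (hu.symm.trans hv)

theorem cliqueFree {s : ℕ} (hΓ : ∀ k, (Γ k).CliqueFree (s + 1)) (hH : H.CliqueFree s) :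
    (transversalJoin C H).CliqueFree (s + 1) := by
  classical
  have hs : s ≠ 0 := by rintro rfl; exact not_cliqueFree_zero hH
  intro T hT
  by_cases hcopy : ∃ t w, copyEmbedding C H t w ∈ T
  · obtain ⟨t, w, hw⟩ := hcopy
    have hout : #{x ∈ T | x ∉ Set.range (copyEmbedding C H t)} ≤ 1 := by
      refine card_le_one.mpr fun x hx y hy => by_contra fun hxy => ?_
      simp only [mem_filter] at hx hy
      have hadj (z) (hz : z ∈ T) (hz' : z ∉ Set.range (copyEmbedding C H t)) :=
        hT.1 hz hw (by rintro rfl; exact hz' ⟨w, rfl⟩)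
      exact not_adj_of_adj_copy (hadj x hx.1 hx.2) (hadj y hy.1 hy.2) hx.2 hy.2
        (hT.1 hx.1 hy.1 hxy)
    have hin : s ≤ #{x ∈ T | x ∈ Set.range (copyEmbedding C H t)} := by
      have := card_filter_add_card_filter_not (s := T)
        (p := fun x => x ∈ Set.range (copyEmbedding C H t))
      have := hT.2
      omega
    exact (copyEmbedding C H t).not_cliqueFree_of_isClique (hT.1.subset (filter_subset _ _))
      (fun x hx => (mem_filter.mp hx).2) (hH.mono hin)
  push Not at hcopy
  obtain ⟨x₀, hx₀⟩ := card_pos.mp (hT.2.trans_gt s.succ_pos)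
  rcases x₀ with _ | ⟨k, u⟩ | ⟨t, w⟩
  · obtain ⟨y, hy, hyx⟩ := exists_mem_ne (by rw [hT.2]; omega) (Sum.inl ())
    obtain ⟨t, w, rfl⟩ := exists_eq_copy_of_adj_apex (hT.1 hx₀ hy hyx.symm)
    exact hcopy t w hy
  · refine (coreEmbedding C H k).not_cliqueFree_of_isClique hT.1 (fun y hy => ?_) (hT.2 ▸ hΓ k)
    by_cases hyx : y = coreEmbedding C H k u
    · exact ⟨u, hyx.symm⟩
    rcases exists_eq_core_or_copy_of_adj_core (hT.1 hx₀ hy (Ne.symm hyx)) with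
      ⟨v, rfl⟩ | ⟨t, w, rfl⟩
    · exact ⟨v, rfl⟩
    · exact (hcopy t w hy).elim
  · exact hcopy t w hx₀

variable (C) in
theorem colorable [Fintype ι] {m N : ℕ} (e : ∀ k, α k ↪ Fin N) (hH : H.Colorable m)
    (hN : Fintype.card ι + 1 + m ≤ N) : (transversalJoin C H).Colorable N := by
  classical
  obtain ⟨ψ⟩ := hH
  let a₀ : Fin N := ⟨0, by omega⟩
  let used (t : ∀ k, α k) : Finset (Fin N) := insert a₀ (univ.image fun k => e k (t k))
  have hroom (t) : Nonempty (Fin m ↪ {x // x ∉ used t}) := by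
    refine Function.Embedding.nonempty_of_card_le ?_
    have h : #(used t) ≤ Fintype.card ι + 1 :=
      (card_insert_le _ _).trans (Nat.add_le_add_right (card_image_le.trans_eq card_univ) 1)
    rw [Fintype.card_fin, Fintype.card_subtype_compl, Fintype.card_coe, Fintype.card_fin]
    omega
  let g t := (hroom t).some
  have apex_fresh (t y) : a₀ ≠ g t y := fun h => (g t y).2 (h ▸ mem_insert_self _ _)
  have core_fresh (t k y) : e k (t k) ≠ g t y := fun h =>
    (g t y).2 (h ▸ mem_insert_of_mem (mem_image_of_mem _ (mem_univ k)))
  refine ⟨Coloring.mk (fun x => match x with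
    | .inl _ => a₀
    | .inr (.inl ⟨k, u⟩) => e k (C k u)
    | .inr (.inr (t, w)) => g t (ψ w)) ?_⟩
  rintro (_ | ⟨k, u⟩ | ⟨t, w⟩) (_ | ⟨l, v⟩ | ⟨t', w'⟩) hadj <;>
    simp only [transversalJoin] at hadj <;> dsimp only
  · exact apex_fresh _ _
  · obtain ⟨rfl, hadj⟩ := hadj
    exact (e k).injective.ne ((C k).valid hadj)
  · rw [← hadj]
    exact core_fresh _ _ _
  · exact (apex_fresh _ _).symm
  · rw [← hadj]
    exact (core_fresh _ _ _).symm
  · obtain ⟨rfl, hadj⟩ := hadj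
    exact fun h => ψ.valid hadj ((g t).injective (Subtype.ext h))

end transversalJoin

end TransversalJoin

theorem transversalJoin.vArrows {W : Type*} {q r s : ℕ} {V α : Fin q → Type*}
    [∀ k, Fintype (V k)] {Γ : ∀ k, SimpleGraph (V k)} {C : ∀ k, (Γ k).Coloring (α k)}
    {H : SimpleGraph W}
    (hΓ : ∀ k : Fin q, VArrows (Γ k) (fun _ : Fin (k + 1) => s))
    (hH : VArrows H (fun _ : Fin r => s - 1)) (hs : s ≠ 0) (hr : r ≤ q + 1) :
    VArrows (transversalJoin C H) (fun _ : Fin r => s) := by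
  classical
  intro c
  by_cases hmono : ∃ k i T, (Γ k).IsNClique s T ∧ ∀ v ∈ T, c (coreEmbedding C H k v) = i
  · obtain ⟨k, i, T, hT, hTi⟩ := hmono
    exact ⟨i, T.map (coreEmbedding C H k).toEmbedding, (coreEmbedding C H k).isNClique_map hT,
      by simpa using hTi⟩
  set a := c (Sum.inl ())
  have hmany (k : Fin q) : k.1 + 1 ≤ #((univ.image (c ∘ coreEmbedding C H k)).erase a) := by
    rcases (hΓ k).exists_isNClique_or_lt_card_image hs (c ∘ coreEmbedding C H k) with h | h
    · exact (hmono ⟨k, h⟩).elim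
    · have := pred_card_le_card_erase (s := univ.image (c ∘ coreEmbedding C H k)) (a := a)
      omega
  obtain ⟨d, hd, hdmem⟩ := Fin.exists_injective_mem_of_le_card _ hmany
  choose u hu using fun k => mem_image.mp (mem_of_mem_erase (hdmem k))
  set t₀ : ∀ k, α k := fun k => C k (u k)
  obtain ⟨j, T, hT, hTj⟩ := hH (c ∘ copyEmbedding C H t₀)
  obtain ⟨x, hx, hxj⟩ :
      ∃ x, (∀ w, (transversalJoin C H).Adj x (copyEmbedding C H t₀ w)) ∧ c x = j := by
    rcases Fin.eq_or_exists_eq_of_injective hd (fun k => ne_of_mem_erase (hdmem k)) hr j with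
      rfl | ⟨k, rfl⟩
    · exact ⟨Sum.inl (), fun _ => trivial, rfl⟩
    · exact ⟨coreEmbedding C H k (u k), fun _ => rfl, (hu k).2⟩
  refine ⟨j, insert x (T.map (copyEmbedding C H t₀).toEmbedding), ?_, ?_⟩
  · have := ((copyEmbedding C H t₀).isNClique_map hT).insert (a := x) fun b hb => by
      obtain ⟨w, -, rfl⟩ := mem_map.mp hb
      exact hx w
    rwa [Nat.sub_add_cancel (Nat.pos_of_ne_zero hs)] at this
  · simpa [hxj] using hTj

/-- A witness for `F^χ(p, s, s+1)`: by `VArrows.not_colorable` the chromatic number of `graph`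
is exactly `p * (s - 1) + 1` when `s ≠ 0`. -/
structure ChiFolkmanGraph (s p : ℕ) where
  n : ℕ
  graph : SimpleGraph (Fin n)
  cliqueFree : graph.CliqueFree (s + 1)
  vArrows : VArrows graph (fun _ : Fin p => s)
  coloring : graph.Coloring (Fin (p * (s - 1) + 1))

def ChiFolkmanGraph.complete {s p : ℕ} (hp : p = 1) : ChiFolkmanGraph s p where
  n := s
  graph := ⊤
  cliqueFree := cliqueFree_of_card_lt (by simp)
  vArrows _ := by
    subst hp
    exact ⟨0, univ, ⟨fun _ _ _ _ h => h, by simp⟩, fun _ _ => Subsingleton.elim _ _⟩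
  coloring := Coloring.mk (Fin.castLE (by subst hp; omega)) fun h => (Fin.castLE_injective _).ne h

section Family

variable (r s : ℕ) (n : ℕ → ℕ) (G : ∀ i : ℕ, SimpleGraph (Fin (n i)))
  (hG : ∀ i, 2 ≤ i → i ≤ r - 1 →
      (G i).CliqueFree (s + 1) ∧
      VArrows (G i) (fun _ : Fin i => s) ∧
      (G i).chromaticNumber = ((i * (s - 1) + 1 : ℕ) : ℕ∞))

noncomputable def chiFolkmanFamily (k : Fin (r - 1)) : ChiFolkmanGraph s (k + 1) :=
  if hk : (k : ℕ) + 1 = 1 then .complete hk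
  else
    have hGk := hG (k + 1) (by omega) (by omega)
    ⟨n (k + 1), G (k + 1), hGk.1, hGk.2.1,
      (chromaticNumber_le_iff_colorable.mp hGk.2.2.le).some⟩

theorem chiFolkmanFamily_n (k : Fin (r - 1)) :
    (chiFolkmanFamily r s n G hG k).n = if (k : ℕ) + 1 = 1 then s else n (k + 1) := by
  unfold chiFolkmanFamily
  split_ifs <;> rfl

theorem sum_chiFolkmanFamily_n (hr : 2 ≤ r) :
    ∑ k, (chiFolkmanFamily r s n G hG k).n = s + ∑ i ∈ Icc 2 (r - 1), n i := by
  simp_rw [chiFolkmanFamily_n]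
  rw [Fin.sum_univ_val_succ_eq_sum_Icc (fun i => if i = 1 then s else n i),
    ← insert_Icc_add_one_left_eq_Icc (by omega : 1 ≤ r - 1), sum_insert (by simp), if_pos rfl]
  exact congrArg _ (sum_congr rfl fun i hi => if_neg (by simp at hi; omega))

end Family

/-- Given, for each `2 ≤ i ≤ r-1`, a `K_{s+1}`-free graph `Gᵢ` on `nᵢ` vertices with
`Gᵢ → (s,…,s)ᵛ` (`i` colors) and `χ(Gᵢ) = i(s-1)+1`, and a `K_s`-free graph `H` on `h`
vertices with `H → (s-1,…,s-1)ᵛ` (`r` colors) and `χ(H) = r(s-2)+1`, there exists a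
`K_{s+1}`-free graph `G` on exactly `1 + s + ∑_{i=2}^{r-1} nᵢ + B·h` vertices, where
`B = ∏_{i=1}^{r-1} (i(s-1)+1)`, with `G → (s,…,s)ᵛ` (`r` colors) and `χ(G) = r(s-1)+1`.
(Hence `F^χ(r,s,s+1) ≤ 1 + s + ∑_{i=2}^{r-1} F^χ(i,s,s+1) + B·F^χ(r,s-1,s)`.) -/
theorem stmt_4 (r s : ℕ) (hr : 2 ≤ r) (hs : 3 ≤ s)
    (n : ℕ → ℕ) (G : ∀ i : ℕ, SimpleGraph (Fin (n i)))
    (hG : ∀ i, 2 ≤ i → i ≤ r - 1 →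
      (G i).CliqueFree (s + 1) ∧
      VArrows (G i) (fun _ : Fin i => s) ∧
      (G i).chromaticNumber = ((i * (s - 1) + 1 : ℕ) : ℕ∞))
    (h : ℕ) (H : SimpleGraph (Fin h))
    (hHfree : H.CliqueFree s)
    (hHarr : VArrows H (fun _ : Fin r => s - 1))
    (hHchi : H.chromaticNumber = ((r * (s - 2) + 1 : ℕ) : ℕ∞)) :
    ∃ G' : SimpleGraph
        (Fin (1 + s + (∑ i ∈ Finset.Icc 2 (r - 1), n i) +
          (∏ i ∈ Finset.Icc 1 (r - 1), (i * (s - 1) + 1)) * h)),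
      G'.CliqueFree (s + 1) ∧
      VArrows G' (fun _ : Fin r => s) ∧
      G'.chromaticNumber = ((r * (s - 1) + 1 : ℕ) : ℕ∞) := by
  set P := chiFolkmanFamily r s n G hG
  set T := transversalJoin (fun k => (P k).coloring) H
  have hcard : Fintype.card (Unit ⊕ (Σ k, Fin (P k).n) ⊕
      ((∀ k : Fin (r - 1), Fin ((k + 1) * (s - 1) + 1)) × Fin h)) =
      1 + s + (∑ i ∈ Icc 2 (r - 1), n i) +
        (∏ i ∈ Icc 1 (r - 1), (i * (s - 1) + 1)) * h := by
    simp only [Fintype.card_sum, Fintype.card_sigma, Fintype.card_pi, Fintype.card_prod,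
      Fintype.card_unit, Fintype.card_fin, P, sum_chiFolkmanFamily_n r s n G hG hr,
      Fin.prod_univ_val_succ_eq_prod_Icc (fun i => i * (s - 1) + 1)]
    ring
  have hTarr : VArrows T (fun _ : Fin r => s) :=
    transversalJoin.vArrows (fun k => (P k).vArrows) hHarr (by omega) (by omega)
  refine ⟨T.overFin hcard,
    (transversalJoin.cliqueFree (fun k => (P k).cliqueFree) hHfree).comap
      (T.overFinIso hcard).isContained',
    hTarr.of_embedding (T.overFinIso hcard).toEmbedding, ?_⟩
  rw [← chromaticNumber_congr (T.overFinIso hcard), Nat.cast_add, Nat.cast_one,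
    chromaticNumber_eq_iff_colorable_not_colorable]
  refine ⟨transversalJoin.colorable _ (fun k => Fin.castLEEmb ?_)
    (chromaticNumber_le_iff_colorable.mp hHchi.le) ?_, hTarr.not_colorable (by omega)⟩
  · have := Nat.mul_le_mul_right (s - 1) (show (k : ℕ) + 1 ≤ r by omega)
    omega
  · have : r * (s - 1) = r * (s - 2) + r := by rw [← Nat.mul_add_one]; congr 1; omega
    simp only [Fintype.card_fin]
    omega
end

section
/- Let s ≥ 2 and let a, b be integers with 2 ≤ a, b ≤ s. Suppose G is a K_{s+1}-free simple graph on n vertices with G → (s, s)^v and χ(G) = 2s−1. Then there exists a K_{s+1}-free simple graph G' with G' → (a, b)^v, χ(G') = a+b−1, and (2s−1)·|V(G')| ≤ (a+b−1)·n. (Hence F_v^χ(a, b; s+1) ≤ ((a+b−1)/(2s−1))·F_v^χ(s, s; s+1).) -/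
/-!
Properly colour `G` with `2s - 1` colours and keep the `a + b - 1` lightest colour classes;
by averaging they hold at most a `(a + b - 1)/(2s - 1)` fraction of the vertices, and the
induced graph `G'` is `(a + b - 1)`-colourable and `K_{s+1}`-free. Split the `(s - a) + (s - b)`
discarded classes into groups of `s - a` and `s - b` classes. A red/blue colouring of `G'`
extends to `G` by making the first group red and the second blue. A monochromatic `K_s` in `G`
meets each class at most once, so it loses at most `s - a` (resp. `s - b`) vertices in the
discarded classes and leaves a red `K_a` or a blue `K_b` in `G'`. Finally any graph arrowing
`(a, b)` has chromatic number at least `a + b - 1`: split `a + b - 2` colours into blocks of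
`a - 1` and `b - 1`.
-/

open Finset SimpleGraph

variable {V W α : Type*} {G : SimpleGraph V}

theorem Finset.exists_card_eq_card_mul_sum_le {ι : Type*} [Fintype ι] [DecidableEq ι]
    (w : ι → ℕ) {k : ℕ} (hk : k ≤ Fintype.card ι) :
    ∃ S : Finset ι, #S = k ∧ Fintype.card ι * ∑ i ∈ S, w i ≤ k * ∑ i, w i := by
  obtain ⟨S, hSk, hmin⟩ := exists_min_image (univ.powersetCard k) (fun S => ∑ i ∈ S, w i)
    (powersetCard_nonempty.2 (by simpa using hk))
  have hS : #S = k := (mem_powersetCard.1 hSk).2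
  have exchange : ∀ i ∈ S, ∀ j ∉ S, w i ≤ w j := by
    intro i hi j hj
    have hj' : j ∉ S.erase i := fun h => hj (mem_of_mem_erase h)
    have hmem : insert j (S.erase i) ∈ univ.powersetCard k := by
      have : 0 < #S := card_pos.2 ⟨i, hi⟩
      rw [mem_powersetCard, card_insert_of_notMem hj', card_erase_of_mem hi]
      exact ⟨subset_univ _, by omega⟩
    have := hmin _ hmem
    rw [sum_insert hj', ← add_sum_erase S w hi] at this
    omega
  have hcompl : #Sᶜ * ∑ i ∈ S, w i ≤ #S * ∑ j ∈ Sᶜ, w j := calc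
    #Sᶜ * ∑ i ∈ S, w i = ∑ _j ∈ Sᶜ, ∑ i ∈ S, w i := by rw [sum_const, smul_eq_mul]
    _ ≤ ∑ j ∈ Sᶜ, ∑ _i ∈ S, w j :=
      sum_le_sum fun j hj => sum_le_sum fun i hi => exchange i hi j (mem_compl.1 hj)
    _ = #S * ∑ j ∈ Sᶜ, w j := by simp only [sum_const, smul_eq_mul, mul_sum]
  refine ⟨S, hS, ?_⟩
  calc Fintype.card ι * ∑ i ∈ S, w i = #S * ∑ i ∈ S, w i + #Sᶜ * ∑ i ∈ S, w i := by
        rw [← add_mul, card_add_card_compl]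
    _ ≤ #S * ∑ i ∈ S, w i + #S * ∑ j ∈ Sᶜ, w j := by gcongr
    _ = k * ∑ i, w i := by rw [← mul_add, sum_add_sum_compl, hS]

theorem Finset.exists_card_eq_card_mul_card_filter_mem_le {V ι : Type*} [Fintype V] [Fintype ι]
    [DecidableEq ι] (f : V → ι) {k : ℕ} (hk : k ≤ Fintype.card ι) :
    ∃ S : Finset ι, #S = k ∧ Fintype.card ι * #{v | f v ∈ S} ≤ k * Fintype.card V := by
  obtain ⟨S, hS, hle⟩ := exists_card_eq_card_mul_sum_le (fun i => #{v | f v = i}) hk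
  refine ⟨S, hS, ?_⟩
  rwa [sum_card_fiberwise_eq_card_filter, sum_card_fiberwise_eq_card_filter, filter_true_of_mem
    (fun v _ => mem_univ (f v)), card_univ] at hle

namespace SimpleGraph

theorem IsClique.card_le_of_mapsTo {f : V → α} (hf : ∀ ⦃u v⦄, G.Adj u v → f u ≠ f v)
    {t : Finset V} (ht : G.IsClique (t : Set V)) {A : Finset α} (htA : ∀ v ∈ t, f v ∈ A) :
    #t ≤ #A :=
  card_le_card_of_injOn f htA fun _ hu _ hv huv => by_contra fun hne => hf (ht hu hv hne) huv

theorem Coloring.colorable_of_forall_mem (C : G.Coloring α) {A : Finset α}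
    (hA : ∀ v, C v ∈ A) : G.Colorable #A := by
  simpa using (Coloring.mk (fun v => (⟨C v, hA v⟩ : A))
    fun h e => C.valid h (congrArg Subtype.val e)).colorable

end SimpleGraph

theorem VArrows.not_colorable_s5 {a b : ℕ} (hG : VArrows G ![a, b]) (ha : 0 < a) (hb : 0 < b) :
    ¬ G.Colorable (a + b - 2) := by
  rintro ⟨D⟩
  have hD : ∀ ⦃u v⦄, G.Adj u v → (D u : ℕ) ≠ D v := fun _ _ h e => D.valid h (Fin.ext e)
  obtain ⟨i, t, ht, hmono⟩ := hG fun v => if (D v : ℕ) < a - 1 then 0 else 1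
  fin_cases i
  · have := ht.isClique.card_le_of_mapsTo hD (A := range (a - 1)) fun v hv => by
      have := hmono v hv
      simp only [Fin.zero_eta, Fin.isValue] at this
      split_ifs at this with h
      · exact mem_range.2 h
      · exact absurd this (by decide)
    simp only [Fin.zero_eta, Fin.isValue, Matrix.cons_val_zero] at ht
    rw [ht.card_eq, card_range] at this
    omega
  · have := ht.isClique.card_le_of_mapsTo hD (A := Ico (a - 1) (a + b - 2)) fun v hv => by
      have := hmono v hv
      simp only [Fin.mk_one, Fin.isValue] at this
      split_ifs at this with h
      · exact absurd this (by decide)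
      · exact mem_Ico.2 ⟨by omega, (D v).2⟩
    simp only [Fin.mk_one, Fin.isValue, Matrix.cons_val_one, Matrix.cons_val_fin_one] at ht
    rw [ht.card_eq, Nat.card_Ico] at this
    omega

open Classical in
theorem VArrows.comap {r : ℕ} {a a' x : Fin r → ℕ} (hG : VArrows G a) (f : W ↪ V)
    (p : V → Fin r)
    (hx : ∀ t : Finset V, G.IsClique (t : Set V) → ∀ i,
      #{v ∈ t | v ∉ Set.range f ∧ p v = i} ≤ x i)
    (ha : ∀ i, a' i + x i ≤ a i) : VArrows (G.comap f) a' := by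
  intro c
  let c' : V → Fin r := fun v => if h : v ∈ Set.range f then c h.choose else p v
  have hc' : ∀ w, c' (f w) = c w := fun w => by
    have h : f w ∈ Set.range f := ⟨w, rfl⟩
    simp only [c', dif_pos h, f.injective h.choose_spec]
  obtain ⟨i, t, ht, hmono⟩ := hG c'
  have hout : #{v ∈ t | v ∉ Set.range f} ≤ x i := by
    refine le_trans (card_le_card fun v hv => ?_) (hx t ht.isClique i)
    obtain ⟨hvt, hvf⟩ := mem_filter.1 hv
    have := hmono v hvt
    simp only [c', dif_neg hvf] at this
    exact mem_filter.2 ⟨hvt, hvf, this⟩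
  have hin : a' i ≤ #(t.preimage f f.injective.injOn) := by
    have := card_filter_add_card_filter_not (s := t) (· ∈ Set.range f)
    rw [ht.card_eq] at this
    rw [card_preimage]
    linarith [ha i]
  obtain ⟨u, hu, hcard⟩ := exists_subset_card_eq hin
  refine ⟨i, u, ⟨fun w hw w' hw' hne => ?_, hcard⟩, fun w hw => ?_⟩
  · exact ht.isClique (mem_preimage.1 (hu hw)) (mem_preimage.1 (hu hw')) (f.injective.ne hne)
  · rw [← hc']
    exact hmono _ (mem_preimage.1 (hu hw))

theorem VArrows.comap_of_colorClasses {ι : Type*} [Fintype ι] [DecidableEq ι] {s a b : ℕ}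
    (hG : VArrows G ![s, s]) (C : G.Coloring ι) {S : Finset ι} (hS : #Sᶜ = s - a + (s - b))
    (f : W ↪ V) (hf : ∀ v, C v ∈ S → v ∈ Set.range f) (has : a ≤ s) (hbs : b ≤ s) :
    VArrows (G.comap f) ![a, b] := by
  classical
  obtain ⟨T, hTS, hT⟩ := exists_subset_card_eq (s := Sᶜ) (n := s - a) (by omega)
  have hST : #(Sᶜ \ T) = s - b := by rw [card_sdiff_of_subset hTS]; omega
  have hC : ∀ ⦃u v⦄, G.Adj u v → C u ≠ C v := fun _ _ h => C.valid h
  refine hG.comap f (fun v => if C v ∈ T then 0 else 1) (x := ![s - a, s - b])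
    (fun t ht i => ?_) (fun i => by fin_cases i <;> simp <;> omega)
  fin_cases i
  · refine ((ht.subset (filter_subset _ _)).card_le_of_mapsTo hC (A := T)
      fun v hv => ?_).trans_eq hT
    obtain ⟨-, -, hp⟩ := mem_filter.1 hv
    by_contra h
    simp [h] at hp
  · refine ((ht.subset (filter_subset _ _)).card_le_of_mapsTo hC (A := Sᶜ \ T)
      fun v hv => ?_).trans_eq hST
    obtain ⟨-, hvf, hp⟩ := mem_filter.1 hv
    refine mem_sdiff.2 ⟨mem_compl.2 fun h => hvf (hf v h), fun h => ?_⟩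
    simp [h] at hp

theorem stmt_5_general (s a b n : ℕ) (ha : 2 ≤ a) (has : a ≤ s)
    (hb : 2 ≤ b) (hbs : b ≤ s) (G : SimpleGraph (Fin n))
    (hGfree : G.CliqueFree (s + 1)) (hGarr : VArrows G ![s, s])
    (hGchi : G.chromaticNumber = ((2 * s - 1 : ℕ) : ℕ∞)) :
    ∃ (m : ℕ) (G' : SimpleGraph (Fin m)),
      G'.CliqueFree (s + 1) ∧ VArrows G' ![a, b] ∧
      G'.chromaticNumber = ((a + b - 1 : ℕ) : ℕ∞) ∧
      (2 * s - 1) * m ≤ (a + b - 1) * n := by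
  classical
  obtain ⟨C⟩ : G.Colorable (2 * s - 1) := by rw [← chromaticNumber_le_iff_colorable, hGchi]
  obtain ⟨S, hS, hSn⟩ :=
    exists_card_eq_card_mul_card_filter_mem_le C (k := a + b - 1) (by simp; omega)
  let U : Finset (Fin n) := {v | C v ∈ S}
  let f := (U.orderEmbOfFin rfl).toEmbedding
  have hf : ∀ v, v ∈ Set.range f ↔ C v ∈ S := by simp [f, U]
  have hGarr' := hGarr.comap_of_colorClasses C (by rw [card_compl, hS]; simp; omega) f
    (fun v => (hf v).2) has hbs
  have hcol : (G.comap f).Colorable (a + b - 1) := hS ▸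
    Coloring.colorable_of_forall_mem (C.comp (Embedding.comap f G).toHom)
      fun w => (hf _).1 ⟨w, rfl⟩
  refine ⟨#U, G.comap f, hGfree.comap ⟨(Embedding.comap f G).toCopy⟩, hGarr', ?_,
    by simpa using hSn⟩
  obtain ⟨k, hk⟩ : ∃ k, a + b - 1 = k + 1 := ⟨a + b - 2, by omega⟩
  rw [hk] at hcol ⊢
  have hnot : ¬ (G.comap f).Colorable k := by
    simpa [show k = a + b - 2 by omega] using hGarr'.not_colorable_s5 (by omega) (by omega)
  exact chromaticNumber_eq_iff_colorable_not_colorable.2 ⟨hcol, hnot⟩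

/-- If `G` is a `K_{s+1}`-free graph on `n` vertices with `G → (s,s)ᵛ` and
`χ(G) = 2s-1`, then for any `2 ≤ a, b ≤ s` there is a `K_{s+1}`-free graph `G'`
with `G' → (a,b)ᵛ`, `χ(G') = a+b-1`, and `(2s-1)·|V(G')| ≤ (a+b-1)·n`.
(Hence `F_v^χ(a,b;s+1) ≤ ((a+b-1)/(2s-1))·F_v^χ(s,s;s+1)`.) -/
theorem stmt_5 (s a b n : ℕ) (hs : 2 ≤ s) (ha : 2 ≤ a) (has : a ≤ s)
    (hb : 2 ≤ b) (hbs : b ≤ s) (G : SimpleGraph (Fin n))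
    (hGfree : G.CliqueFree (s + 1)) (hGarr : VArrows G ![s, s])
    (hGchi : G.chromaticNumber = ((2 * s - 1 : ℕ) : ℕ∞)) :
    ∃ (m : ℕ) (G' : SimpleGraph (Fin m)),
      G'.CliqueFree (s + 1) ∧ VArrows G' ![a, b] ∧
      G'.chromaticNumber = ((a + b - 1 : ℕ) : ℕ∞) ∧
      (2 * s - 1) * m ≤ (a + b - 1) * n :=
  stmt_5_general s a b n ha has hb hbs G hGfree hGarr hGchi
end

section
/- For every integer s ≥ 1, the (2s−1)-set chromatic number of the cycle C_{4s−1} equals 4s−1; that is, the minimum n for which one can assign to each vertex of the cycle on 4s−1 vertices a (2s−1)-element subset of {1,…,n} so that adjacent vertices receive disjoint subsets is exactly 4s−1. -/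
/-!
Give vertex `v` of `C_{2m+1}` the arc of `m` consecutive colors starting at `m * v` in
`ℤ/(2m+1)`: consecutive arcs abut without overlapping, so `2m + 1` colors suffice. Conversely,
with only `2m` colors the sets of adjacent vertices are complementary, so whether a fixed color
is present would properly 2-color the odd cycle.
-/

open Finset SimpleGraph
open Fin.NatCast Fin.CommRing

variable {V α : Type*}

def IsSetColoring (G : SimpleGraph V) (r : ℕ) (f : V → Finset α) : Prop :=
  (∀ v, #(f v) = r) ∧ ∀ v w, G.Adj v w → Disjoint (f v) (f w)

theorem Finset.eq_compl_of_disjoint_of_card_le [Fintype α] [DecidableEq α] {s t : Finset α}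
    (hst : Disjoint s t) (hcard : Fintype.card α ≤ #s + #t) : t = sᶜ :=
  eq_of_subset_of_card_le (subset_compl_iff_disjoint_left.2 hst) (by rw [card_compl]; omega)

namespace IsSetColoring

variable {G : SimpleGraph V} {r : ℕ} {f : V → Finset α}

theorem colorable_two [Fintype α] [DecidableEq α] (hf : IsSetColoring G r f)
    (hα : Fintype.card α ≤ 2 * r) (a : α) : G.Colorable 2 := by
  refine (Coloring.mk (fun v => decide (a ∈ f v)) fun {v w} hvw => ?_).colorable
  have hw : f w = (f v)ᶜ :=
    eq_compl_of_disjoint_of_card_le (hf.2 v w hvw) (by rw [hf.1, hf.1]; omega)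
  simp [hw]

theorem two_mul_lt_card [Fintype α] (hf : IsSetColoring G r f) (hG : ¬G.Colorable 2)
    (hr : 0 < r) : 2 * r < Fintype.card α := by
  classical
  by_contra! hα
  obtain ⟨v⟩ : Nonempty V := by
    by_contra! hV
    exact hG (.of_isEmpty 2)
  obtain ⟨a, -⟩ := card_pos.1 (hf.1 v ▸ hr)
  exact hG (hf.colorable_two hα a)

end IsSetColoring

theorem SimpleGraph.not_colorable_two_cycleGraph {n : ℕ} (hn : 2 ≤ n) (hodd : Odd n) :
    ¬(cycleGraph n).Colorable 2 := fun h => by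
  have := h.chromaticNumber_le
  rw [chromaticNumber_cycleGraph_of_odd n hn hodd] at this
  norm_num at this

theorem SimpleGraph.eq_add_one_or_eq_add_one_of_cycleGraph_adj {n : ℕ} [NeZero n]
    {u v : Fin n} (h : (cycleGraph n).Adj u v) : v = u + 1 ∨ u = v + 1 := by
  obtain _ | _ | n := n
  · exact u.elim0
  · exact absurd h cycleGraph_one_adj
  · rw [cycleGraph_adj, sub_eq_iff_eq_add', sub_eq_iff_eq_add'] at h
    exact h.symm

def cycleArc (m : ℕ) (v : Fin (2 * m + 1)) : Finset (Fin (2 * m + 1)) :=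
  (Iio (m : Fin (2 * m + 1))).map (addLeftEmbedding (m * v))

theorem Fin.val_natCast_two_mul_add_one (m : ℕ) : ((m : Fin (2 * m + 1)) : ℕ) = m :=
  Fin.val_cast_of_lt (by omega)

theorem disjoint_cycleArc_add_one (m : ℕ) (v : Fin (2 * m + 1)) :
    Disjoint (cycleArc m v) (cycleArc m (v + 1)) := by
  simp only [Finset.disjoint_left, cycleArc, mem_map, mem_Iio, addLeftEmbedding_apply]
  rintro _ ⟨a, ha, rfl⟩ ⟨b, hb, hab⟩
  have hab' : a = m + b := by linear_combination hab.symm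
  rw [Fin.lt_def, Fin.val_natCast_two_mul_add_one] at ha hb
  rw [hab', Fin.val_add, Fin.val_natCast_two_mul_add_one, Nat.mod_eq_of_lt (by omega)] at ha
  omega

theorem isSetColoring_cycleArc (m : ℕ) :
    IsSetColoring (cycleGraph (2 * m + 1)) m (cycleArc m) := by
  refine ⟨fun v => ?_, fun v w h => ?_⟩
  · rw [cycleArc, card_map, Fin.card_Iio, Fin.val_natCast_two_mul_add_one]
  · rcases eq_add_one_or_eq_add_one_of_cycleGraph_adj h with rfl | rfl
    · exact disjoint_cycleArc_add_one m v
    · exact (disjoint_cycleArc_add_one m w).symm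

noncomputable def setChromaticNumber (G : SimpleGraph V) (r : ℕ) : ℕ :=
  sInf {n | ∃ f : V → Finset (Fin n), IsSetColoring G r f}

theorem setChromaticNumber_cycleGraph_two_mul_add_one {m : ℕ} (hm : 0 < m) :
    setChromaticNumber (cycleGraph (2 * m + 1)) m = 2 * m + 1 := by
  refine le_antisymm (Nat.sInf_le ⟨_, isSetColoring_cycleArc m⟩)
    (le_csInf ⟨_, _, isSetColoring_cycleArc m⟩ ?_)
  rintro n ⟨f, hf⟩
  simpa using hf.two_mul_lt_card
    (not_colorable_two_cycleGraph (by omega) (odd_two_mul_add_one m)) hm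

/-- The `(2s-1)`-set chromatic number of the cycle `C_{4s-1}` equals `4s-1`: the
minimum `n` for which each vertex of the cycle on `4s-1` vertices can be assigned a
`(2s-1)`-element subset of an `n`-element color set so that adjacent vertices receive
disjoint subsets is exactly `4s-1`. -/
theorem stmt_7 (s : ℕ) (hs : 1 ≤ s) :
    sInf {n : ℕ | ∃ f : Fin (4 * s - 1) → Finset (Fin n),
        (∀ v, (f v).card = 2 * s - 1) ∧
        ∀ v w, (SimpleGraph.cycleGraph (4 * s - 1)).Adj v w → Disjoint (f v) (f w)} =
      4 * s - 1 := by
  rw [show 4 * s - 1 = 2 * (2 * s - 1) + 1 by omega]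
  exact setChromaticNumber_cycleGraph_two_mul_add_one (by omega)
end

section
/- Let G and H be finite simple graphs with H nonempty and χ(H) = r. Then χ^(r)(G) = χ(G[H]), where G[H] is the lexicographic product of G and H. -/
/-- The lexicographic product `G[H]` of two simple graphs: `(u, v)` is adjacent to
`(u', v')` iff `u` is adjacent to `u'` in `G`, or `u = u'` and `v` is adjacent to
`v'` in `H`. -/
def SimpleGraph.lexProd {V W : Type*} (G : SimpleGraph V) (H : SimpleGraph W) :
    SimpleGraph (V × W) where
  Adj p q := G.Adj p.1 q.1 ∨ (p.1 = q.1 ∧ H.Adj p.2 q.2)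
  symm := by
    constructor
    rintro p q (h | ⟨h1, h2⟩)
    · exact Or.inl h.symm
    · exact Or.inr ⟨h1.symm, h2.symm⟩
  loopless := by
    constructor
    rintro p (h | ⟨-, h⟩)
    · exact G.irrefl h
    · exact H.irrefl h

/-!
A proper colouring of `G[H]` restricted to a fibre `{v} × W` is a proper colouring of `H`, so it
uses at least `χ(H) = r` colours; any `r` of them form an `r`-set at `v`, and the sets at adjacent
vertices of `G` are disjoint because every vertex of one fibre is adjacent to every vertex of the
other. Conversely, given `r`-sets `f v` and a colouring `h : W → Fin r` of `H`, colour `(v, w)` by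
the `h w`-th element of `f v`.
-/

namespace SimpleGraph

variable {V W α : Type*} {G : SimpleGraph V} {H : SimpleGraph W} {r n : ℕ}

def SetColorable (G : SimpleGraph V) (r n : ℕ) : Prop :=
  ∃ f : V → Finset (Fin n), (∀ v, (f v).card = r) ∧ ∀ v w, G.Adj v w → Disjoint (f v) (f w)

def lexProdRight (G : SimpleGraph V) (H : SimpleGraph W) (v : V) : H →g G.lexProd H where
  toFun w := (v, w)
  map_rel' h := Or.inr ⟨rfl, h⟩

theorem Coloring.colorable_card_image [Fintype V] [DecidableEq α] (C : G.Coloring α) :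
    G.Colorable (Finset.univ.image C).card := by
  let C' : G.Coloring (Finset.univ.image C) :=
    Coloring.mk (fun v ↦ ⟨C v, Finset.mem_image_of_mem _ (Finset.mem_univ v)⟩)
      fun hadj heq ↦ C.valid hadj (congrArg Subtype.val heq)
  simpa using C'.colorable

theorem Coloring.le_card_image [Fintype V] [DecidableEq α] (hr : (r : ℕ∞) ≤ G.chromaticNumber)
    (C : G.Coloring α) : r ≤ (Finset.univ.image C).card := by
  exact_mod_cast hr.trans C.colorable_card_image.chromaticNumber_le

theorem SetColorable.colorable_lexProd (hG : G.SetColorable r n) (hH : H.Colorable r) :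
    (G.lexProd H).Colorable n := by
  obtain ⟨f, hcard, hdisj⟩ := hG
  obtain ⟨h⟩ := hH
  refine ⟨Coloring.mk (fun p ↦ (f p.1).orderEmbOfFin (hcard p.1) (h p.2)) ?_⟩
  rintro ⟨v, w⟩ ⟨v', w'⟩ (hadj | ⟨rfl, hadj⟩) heq
  · have hmem := (f v').orderEmbOfFin_mem (hcard v') (h w')
    rw [← heq] at hmem
    exact Finset.disjoint_left.mp (hdisj v v' hadj) (Finset.orderEmbOfFin_mem _ _ _) hmem
  · exact h.valid hadj (((f v).orderEmbOfFin (hcard v)).injective heq)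

theorem setColorable_of_colorable_lexProd [Fintype W] (hH : (r : ℕ∞) ≤ H.chromaticNumber)
    (hG : (G.lexProd H).Colorable n) : G.SetColorable r n := by
  classical
  obtain ⟨c⟩ := hG
  let fibreColors (v : V) : Finset (Fin n) :=
    Finset.univ.image (c.comp (G.lexProdRight H v))
  have hfibre (v : V) : r ≤ (fibreColors v).card := Coloring.le_card_image hH _
  choose f hsub hcard using fun v ↦ Finset.exists_subset_card_eq (hfibre v)
  refine ⟨f, hcard, fun v v' hadj ↦ Finset.disjoint_left.mpr fun _ hv hv' ↦ ?_⟩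
  obtain ⟨w, -, rfl⟩ := Finset.mem_image.mp (hsub v hv)
  obtain ⟨w', -, heq⟩ := Finset.mem_image.mp (hsub v' hv')
  exact c.valid (show (G.lexProd H).Adj (v, w) (v', w') from Or.inl hadj) heq.symm

theorem setColorable_iff_colorable_lexProd [Fintype W] (hH : H.chromaticNumber = r) :
    G.SetColorable r n ↔ (G.lexProd H).Colorable n :=
  ⟨fun hG ↦ hG.colorable_lexProd (chromaticNumber_le_iff_colorable.mp hH.le),
    setColorable_of_colorable_lexProd hH.ge⟩

end SimpleGraph

theorem stmt_8_general {V W : Type*} [Fintype V] [Fintype W]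
    (G : SimpleGraph V) (H : SimpleGraph W) (r : ℕ)
    (hH : H.chromaticNumber = (r : ℕ∞)) :
    ((sInf {n : ℕ | ∃ f : V → Finset (Fin n),
        (∀ v, (f v).card = r) ∧
        ∀ v w, G.Adj v w → Disjoint (f v) (f w)} : ℕ) : ℕ∞) =
      (G.lexProd H).chromaticNumber := by
  rw [(G.lexProd H).colorable_of_fintype.chromaticNumber_eq_sInf]
  congr 2
  ext n
  exact SimpleGraph.setColorable_iff_colorable_lexProd hH

/-- For finite graphs `G` and `H` with `H` nonempty and `χ(H) = r`, the `r`-set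
chromatic number of `G` equals the chromatic number of the lexicographic product
`G[H]`. -/
theorem stmt_8 {V W : Type*} [Fintype V] [Fintype W] [Nonempty W]
    (G : SimpleGraph V) (H : SimpleGraph W) (r : ℕ)
    (hH : H.chromaticNumber = (r : ℕ∞)) :
    ((sInf {n : ℕ | ∃ f : V → Finset (Fin n),
        (∀ v, (f v).card = r) ∧
        ∀ v w, G.Adj v w → Disjoint (f v) (f w)} : ℕ) : ℕ∞) =
      (G.lexProd H).chromaticNumber :=
  stmt_8_general G H r hH
end

section
/- Let s ≥ 3 and let G be a finite simple graph such that G → (s, s)^v while for every vertex u of G the graph G − u obtained by deleting u does not satisfy (G − u) → (s, s)^v. Then the minimum degree of G satisfies δ(G) ≥ 2s−2. -/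
/-- If `G → (s,s)ᵛ` but `G - u ↛ (s,s)ᵛ` for every vertex `u`, then the minimum
degree of `G` is at least `2s-2`. -/
theorem stmt_11 {V : Type*} [Fintype V] (s : ℕ) (hs : 3 ≤ s)
    (G : SimpleGraph V) [DecidableRel G.Adj]
    (hGarr : VArrows G ![s, s])
    (hmin : ∀ u : V, ¬ VArrows (G.induce {v : V | v ≠ u}) ![s, s]) :
    2 * s - 2 ≤ G.minDegree := by
  classical
  have hne : Nonempty V := by
    obtain ⟨i, t, ht, -⟩ := hGarr (fun _ => 0)
    have hi : (![s, s] : Fin 2 → ℕ) i = s := by fin_cases i <;> rfl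
    have hpos : 0 < t.card := by rw [ht.2, hi]; omega
    obtain ⟨v, -⟩ := Finset.card_pos.mp hpos
    exact ⟨v⟩
  apply SimpleGraph.le_minDegree_of_forall_le_degree
  intro u
  by_contra hdeg
  push_neg at hdeg
  have h := hmin u
  rw [VArrows] at h
  push_neg at h
  obtain ⟨c, hc⟩ := h
  set N := G.neighborFinset u with hN
  have hNcard : N.card < 2 * s - 2 := by
    rwa [← SimpleGraph.card_neighborFinset_eq_degree] at hdeg
  let f : V → Fin 2 := fun v => if h : v ≠ u then c ⟨v, h⟩ else 0
  have fin2 : ∀ x : Fin 2, x ≠ 0 ↔ x = 1 := by decide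
  have heq : N.filter (fun v => ¬ f v = 0) = N.filter (fun v => f v = 1) := by
    apply Finset.filter_congr
    intro v _
    simp [fin2 (f v)]
  have hsplit := Finset.card_filter_add_card_filter_not (s := N)
    (p := fun v => f v = 0)
  rw [heq] at hsplit
  obtain ⟨i, hAi⟩ : ∃ i : Fin 2, (N.filter (fun v => f v = i)).card ≤ s - 2 := by
    by_cases h0 : (N.filter (fun v => f v = 0)).card ≤ s - 2
    · exact ⟨0, h0⟩
    · exact ⟨1, by omega⟩
  let c' : V → Fin 2 := fun v => if v = u then i else f v
  obtain ⟨j, t, ht, hmono⟩ := hGarr c'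
  have hj : (![s, s] : Fin 2 → ℕ) j = s := by fin_cases j <;> rfl
  rw [hj] at ht
  by_cases hu : u ∈ t
  · have hji : j = i := by
      have := hmono u hu
      simp only [c', if_pos rfl] at this
      exact this.symm
    have hsub : t.erase u ⊆ N.filter (fun v => f v = i) := by
      intro v hv
      obtain ⟨hvu, hvt⟩ := Finset.mem_erase.mp hv
      have hadj : G.Adj u v := ht.1 hu hvt (Ne.symm hvu)
      refine Finset.mem_filter.mpr ⟨(G.mem_neighborFinset u v).mpr hadj, ?_⟩
      have hcv := hmono v hvt
      simp only [c', if_neg hvu] at hcv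
      rw [hcv, hji]
    have hle : s - 1 ≤ s - 2 := by
      have h1 : (t.erase u).card = s - 1 := by
        rw [Finset.card_erase_of_mem hu, ht.2]
      calc s - 1 = (t.erase u).card := h1.symm
        _ ≤ (N.filter (fun v => f v = i)).card := Finset.card_le_card hsub
        _ ≤ s - 2 := hAi
    omega
  · let t' : Finset ↥{v : V | v ≠ u} := t.subtype (fun v => v ∈ {v : V | v ≠ u})
    have hmem : ∀ a : ↥{v : V | v ≠ u}, a ∈ t' ↔ a.1 ∈ t := by
      intro a
      simp [t', Finset.mem_subtype]
    have hcard' : t'.card = s := by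
      rw [Finset.card_subtype, Finset.filter_true_of_mem, ht.2]
      intro x hx
      intro hxu
      exact hu (hxu ▸ hx)
    have hclq : (G.induce {v : V | v ≠ u}).IsNClique s t' := by
      constructor
      · intro a ha b hb hab
        have ha' : a.1 ∈ t := (hmem a).mp ha
        have hb' : b.1 ∈ t := (hmem b).mp hb
        have hadj : G.Adj a.1 b.1 := ht.1 ha' hb' (fun h => hab (Subtype.ext h))
        exact hadj
      · exact hcard'
    obtain ⟨v, hvt', hvc⟩ := hc j t' (by rw [hj]; exact hclq)
    have hv1 : v.1 ∈ t := (hmem v).mp hvt'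
    have hvne : v.1 ≠ u := v.2
    have hcv := hmono v.1 hv1
    simp only [c', if_neg hvne, f, dif_pos hvne] at hcv
    exact hvc hcv
end

section
/- Let s ≥ 3 and suppose there exists at least one K_{s+1}-free finite simple graph H with H → (s, s)^v. Then there exists a K_{s+1}-free finite simple graph G with minimum degree δ(G) = 2s−2 such that G → (s, s)^v and, for every vertex u of G, (G − u) does not satisfy (G − u) → (s, s)^v. -/
open scoped Classical

/-!
Pass to a vertex-critical induced subgraph `G₀` of `H` and pick a vertex `w`. Every 2-colouring of
`D = G₀ - w` without a monochromatic `K_s` extends to `G₀` by giving `w` either colour, so the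
neighbourhood of `w` contains a monochromatic `K_{s-1}` of `D` of each colour. Take a minimal set
`M ⊆ N(w)` with this property and `z ∈ M`; minimality at `z` yields such a colouring `χ` of `D`
with no `K_{s-1}` of some colour `κ` in `M - z`, which forces `χ z = κ`.

Glue copies of `D`, one for each pair `(i, j)` of vertices of two disjoint terminal cliques
`K_{s-1}`, joining `i` to `M - z` and `j` to `{z} ∪ (N_D(z) ∩ M)` in that copy, and add an apex
adjacent to both terminal cliques. No `K_{s+1}` appears since `w` is adjacent to all of `M`.
The gadget arrows `(s, s)ᵛ`: a colouring either has a monochromatic `K_s` in a copy, or two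
terminals `i, j` of the same colour, and then the copy `(i, j)` has a `K_{s-1}` of that colour in
`M - z` or through `z`, or else the apex closes a monochromatic terminal clique. Without the apex,
colour each copy by `χ`, the first terminal clique by `κ` and the second by the other colour.
So a minimal arrowing induced subgraph of the gadget contains the apex, of degree `2s - 2`, while
every vertex `v` of a vertex-critical graph has a `K_{s-1}` of each colour in its neighbourhood,
found by extending a colouring of `G - v` both ways.
-/

open Finset SimpleGraph

section

variable {V W : Type*}

theorem SimpleGraph.IsNClique.map_copy_s12 {G : SimpleGraph V} {H : SimpleGraph W} {n : ℕ}
    {t : Finset V} (h : G.IsNClique n t) (f : Copy G H) : H.IsNClique n (t.map f.toEmbedding) :=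
  (h.map (f := f.toEmbedding)).mono
    ((map_le_iff_le_comap _ _ _).mpr fun _ _ => f.toHom.map_adj)

theorem VArrows.of_copy {G : SimpleGraph V} {H : SimpleGraph W} {r : ℕ} {a : Fin r → ℕ}
    (h : VArrows G a) (f : Copy G H) : VArrows H a := by
  intro c
  obtain ⟨i, t, ht, hmono⟩ := h (c ∘ f)
  exact ⟨i, t.map f.toEmbedding, ht.map_copy_s12 f, by simpa [Copy.toEmbedding] using hmono⟩

theorem varrows_pair_iff {G : SimpleGraph V} {s : ℕ} :
    VArrows G ![s, s] ↔
      ∀ c : V → Fin 2, ∃ i : Fin 2, ∃ t : Finset V, G.IsNClique s t ∧ ∀ v ∈ t, c v = i := by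
  have hconst : (![s, s] : Fin 2 → ℕ) = fun _ => s := by ext i; fin_cases i <;> rfl
  rw [VArrows, hconst]

def SimpleGraph.NoMonoClique (G : SimpleGraph V) (s : ℕ) (c : V → Fin 2) : Prop :=
  ∀ (i : Fin 2) (t : Finset V), G.IsNClique s t → ∃ v ∈ t, c v ≠ i

theorem not_varrows_pair_iff {G : SimpleGraph V} {s : ℕ} :
    ¬ VArrows G ![s, s] ↔ ∃ c : V → Fin 2, G.NoMonoClique s c := by
  simp only [varrows_pair_iff, NoMonoClique]
  push Not
  rfl

def SimpleGraph.IsVArrowsCritical (G : SimpleGraph V) (s : ℕ) : Prop :=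
  VArrows G ![s, s] ∧ ∀ u, ¬ VArrows (G.induce {v | v ≠ u}) ![s, s]

theorem exists_isVArrowsCritical_induce [Finite V] {G : SimpleGraph V} {s : ℕ}
    (h : VArrows G ![s, s]) :
    ∃ S : Set V, (G.induce S).IsVArrowsCritical s ∧
      ∀ u, ¬ VArrows (G.induce {v | v ≠ u}) ![s, s] → u ∈ S := by
  obtain ⟨S, -, hmin⟩ :=
    exists_minimal_le_of_wellFoundedLT (fun S : Set V => VArrows (G.induce S) ![s, s]) Set.univ
      (h.of_copy (induceUnivIso G).symm.toCopy)
  refine ⟨S, ⟨hmin.prop, fun u hu => ?_⟩, fun u hu => ?_⟩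
  · refine hmin.not_prop_of_lt (Set.sdiff_singleton_ssubset.mpr u.prop)
      (hu.of_copy ⟨induceHom (Embedding.induce S).toHom fun x (hx : x ≠ u) => ?_, ?_⟩)
    · exact ⟨x.prop, fun h => hx (Subtype.ext h)⟩
    · exact induceHom_injective _ _ Subtype.val_injective.injOn
  · by_contra huS
    exact hu (hmin.prop.of_copy (induceHomOfLE G fun v hv (h : v = u) => huS (h ▸ hv)).toCopy)

theorem mem_of_isNClique_of_noMonoClique_induce {G : SimpleGraph V} {s : ℕ} {v : V}
    {c : {x | x ≠ v} → Fin 2} (hc : (G.induce {x | x ≠ v}).NoMonoClique s c) {f : V → Fin 2}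
    (hf : ∀ x (hx : x ≠ v), f x = c ⟨x, hx⟩) {i : Fin 2} {t : Finset V} (ht : G.IsNClique s t)
    (hmono : ∀ x ∈ t, f x = i) : v ∈ t := by
  by_contra hv
  have hsub : ∀ x ∈ t, x ∈ {x | x ≠ v} := fun x hx (h : x = v) => hv (h ▸ hx)
  have ht' : (G.induce {x | x ≠ v}).IsNClique s (t.subtype (· ∈ {x | x ≠ v})) := by
    rwa [isNClique_induce_iff, subtype_map_of_mem hsub]
  obtain ⟨y, hy, hne⟩ := hc i _ ht'
  exact hne (hf y y.prop ▸ hmono y (mem_subtype.mp hy))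

theorem SimpleGraph.IsVArrowsCritical.two_mul_le_degree [Fintype V] {G : SimpleGraph V} {s : ℕ}
    (hG : G.IsVArrowsCritical s) (v : V) : 2 * (s - 1) ≤ G.degree v := by
  obtain ⟨c, hc⟩ := not_varrows_pair_iff.mp (hG.2 v)
  have hside : ∀ i : Fin 2, ∃ Q ⊆ G.neighborFinset v,
      #Q = s - 1 ∧ ∀ x ∈ Q, ∀ hx : x ≠ v, c ⟨x, hx⟩ = i := by
    intro i
    let f : V → Fin 2 := fun x => if hx : x = v then i else c ⟨x, hx⟩
    obtain ⟨j, t, ht, hmono⟩ := varrows_pair_iff.mp hG.1 f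
    have hv := mem_of_isNClique_of_noMonoClique_induce hc (fun x hx => dif_neg hx) ht hmono
    have hij : i = j := by simpa [f] using hmono v hv
    refine ⟨t.erase v, fun x hx => ?_, by rw [card_erase_of_mem hv, ht.card_eq], fun x hx hxv => ?_⟩
    · exact (mem_neighborFinset G v x).mpr
        (ht.isClique hv (mem_of_mem_erase hx) (ne_of_mem_erase hx).symm)
    · simpa [f, hxv, hij] using hmono x (mem_of_mem_erase hx)
  obtain ⟨Q₀, hQ₀, hcard₀, hcol₀⟩ := hside 0
  obtain ⟨Q₁, hQ₁, hcard₁, hcol₁⟩ := hside 1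
  have hdisj : Disjoint Q₀ Q₁ := by
    refine Finset.disjoint_left.mpr fun x hx₀ hx₁ => ?_
    have hxv : x ≠ v := (G.ne_of_adj ((mem_neighborFinset G v x).mp (hQ₀ hx₀))).symm
    exact absurd ((hcol₀ x hx₀ hxv).symm.trans (hcol₁ x hx₁ hxv)) (by decide)
  calc 2 * (s - 1) = #(Q₀ ∪ Q₁) := by rw [card_union_of_disjoint hdisj, hcard₀, hcard₁]; ring
    _ ≤ G.degree v := card_le_card (union_subset hQ₀ hQ₁)

theorem SimpleGraph.IsVArrowsCritical.minDegree_eq [Fintype V] {G : SimpleGraph V} {s : ℕ}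
    (hG : G.IsVArrowsCritical s) {u : V} (hu : G.degree u ≤ 2 * (s - 1)) :
    G.minDegree = 2 * (s - 1) :=
  have : Nonempty V := ⟨u⟩
  le_antisymm ((G.minDegree_le_degree u).trans hu)
    (G.le_minDegree_of_forall_le_degree _ hG.two_mul_le_degree)

theorem SimpleGraph.IsVArrowsCritical.of_iso {G : SimpleGraph V} {H : SimpleGraph W} {s : ℕ}
    (hG : G.IsVArrowsCritical s) (φ : G ≃g H) : H.IsVArrowsCritical s :=
  ⟨hG.1.of_copy φ.toCopy, fun u hu => hG.2 (φ.symm u)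
    (hu.of_copy ⟨induceHom φ.symm.toHom fun _ hx => φ.symm.injective.ne hx,
      induceHom_injective _ _ φ.symm.injective.injOn⟩)⟩

theorem exists_fin_of_isVArrowsCritical [Fintype V] {G : SimpleGraph V} {s : ℕ}
    (hG : G.IsVArrowsCritical s) (hfree : G.CliqueFree (s + 1)) {u : V}
    (hu : G.degree u ≤ 2 * (s - 1)) :
    ∃ (m : ℕ) (G' : SimpleGraph (Fin m)),
      G'.CliqueFree (s + 1) ∧ G'.minDegree = 2 * s - 2 ∧ VArrows G' ![s, s] ∧
      ∀ u : Fin m, ¬ VArrows (G'.induce {v : Fin m | v ≠ u}) ![s, s] := by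
  let φ := Iso.map (Fintype.equivFin V) G
  have hG' := hG.of_iso φ
  refine ⟨_, _, hfree.comap φ.isContained', ?_, hG'.1, hG'.2⟩
  rw [show 2 * s - 2 = 2 * (s - 1) by omega, ← hG.minDegree_eq hu]
  convert φ.minDegree_eq.symm

theorem not_varrows_induce_ne {G : SimpleGraph V} {s : ℕ} {u : V} (c : V → Fin 2)
    (hc : ∀ i t, G.IsNClique s t → u ∉ t → ∃ v ∈ t, c v ≠ i) :
    ¬ VArrows (G.induce {v | v ≠ u}) ![s, s] := by
  refine not_varrows_pair_iff.mpr ⟨fun x => c x, fun i t ht => ?_⟩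
  rw [isNClique_induce_iff] at ht
  obtain ⟨v, hv, hne⟩ := hc i _ ht fun h => by simpa using map_subtype_subset t h
  obtain ⟨x, hx, rfl⟩ := mem_map.mp hv
  exact ⟨x, hx, hne⟩

/-- `none` is the apex, `some (.inl (p, v))` is the vertex `v` of the copy of `D` indexed by
`p`, and `some (.inr (σ, i))` is the `i`-th vertex of the terminal clique on side `σ`. -/
abbrev GadgetVertex (n : ℕ) (W : Type*) := Option ((Fin 2 → Fin n) × W ⊕ Fin 2 × Fin n)

def gadgetAdj {n : ℕ} (D : SimpleGraph W) (att : Fin 2 → Finset W) :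
    GadgetVertex n W → GadgetVertex n W → Prop
  | some (.inl (p, v)), some (.inl (q, w)) => p = q ∧ D.Adj v w
  | some (.inl (p, v)), some (.inr (σ, i)) | some (.inr (σ, i)), some (.inl (p, v)) =>
      p σ = i ∧ v ∈ att σ
  | some (.inr (σ, i)), some (.inr (τ, j)) => σ = τ ∧ i ≠ j
  | none, some (.inr _) | some (.inr _), none => True
  | _, _ => False

def SimpleGraph.gadget (n : ℕ) (D : SimpleGraph W) (att : Fin 2 → Finset W) :
    SimpleGraph (GadgetVertex n W) where
  Adj := gadgetAdj D att
  symm := by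
    constructor
    rintro (_ | ⟨p, v⟩ | ⟨σ, i⟩) (_ | ⟨q, w⟩ | ⟨τ, j⟩) h <;>
      simp_all [gadgetAdj, eq_comm, D.adj_comm]
  loopless := by
    constructor
    rintro (_ | ⟨p, v⟩ | ⟨σ, i⟩) h <;> simp_all [gadgetAdj]

namespace SimpleGraph.gadget

variable {n : ℕ} {D : SimpleGraph W} {att : Fin 2 → Finset W}

@[simp] theorem adj_none_term {σ : Fin 2} {i : Fin n} :
    (gadget n D att).Adj none (some (.inr (σ, i))) :=
  trivial

@[simp] theorem not_adj_none_copy {p : Fin 2 → Fin n} {v : W} :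
    ¬ (gadget n D att).Adj none (some (.inl (p, v))) :=
  id

def copyEmbedding (p : Fin 2 → Fin n) : D ↪g gadget n D att where
  toFun v := some (.inl (p, v))
  inj' := by intro _ _ h; simpa using h
  map_rel_iff' := and_iff_right rfl

theorem degree_none [Fintype W] : (gadget n D att).degree none = 2 * n := by
  have : (gadget n D att).neighborFinset none = univ.image fun x => some (.inr x) := by
    ext (_ | ⟨p, v⟩ | ⟨σ, i⟩) <;> simp
  rw [← card_neighborFinset_eq_degree, this,
    card_image_of_injective _ (by intro _ _ h; simpa using h), card_univ, Fintype.card_prod,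
    Fintype.card_fin, Fintype.card_fin]

theorem card_le_of_isClique_of_forall_term {T : Finset (GadgetVertex n W)}
    (hT : (gadget n D att).IsClique (T : Set (GadgetVertex n W)))
    (hterm : ∀ x ∈ T, ∃ σ i, x = some (.inr (σ, i))) : #T ≤ n := by
  rcases T.eq_empty_or_nonempty with rfl | ⟨x, hx⟩
  · simp
  obtain ⟨σ, i, rfl⟩ := hterm x hx
  have hside : T ⊆ univ.image fun j => some (.inr (σ, j)) := by
    intro y hy
    obtain ⟨τ, j, rfl⟩ := hterm y hy
    obtain rfl : τ = σ := by
      by_contra hτ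
      exact hτ (hT hy hx (by simp [hτ])).1
    simp
  simpa using card_le_card hside |>.trans card_image_le

theorem exists_copy_mem_of_isClique {T : Finset (GadgetVertex n W)}
    (hT : (gadget n D att).IsClique (T : Set (GadgetVertex n W))) (hnone : none ∉ T)
    (hn : n < #T) : ∃ p v, some (.inl (p, v)) ∈ T := by
  by_contra! hcopy
  refine hn.not_ge (card_le_of_isClique_of_forall_term hT fun x hx => ?_)
  rcases x with _ | ⟨p, v⟩ | ⟨σ, i⟩
  exacts [absurd hx hnone, absurd hx (hcopy p v), ⟨σ, i, rfl⟩]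

theorem exists_copy_of_isClique [Fintype W] {T : Finset (GadgetVertex n W)}
    (hT : (gadget n D att).IsClique (T : Set (GadgetVertex n W))) (hnone : none ∉ T)
    (hn : n < #T) :
    ∃ (p : Fin 2 → Fin n) (Q : Finset W), D.IsClique (Q : Set W) ∧
      (∀ v ∈ Q, some (.inl (p, v)) ∈ T) ∧
      (#Q = #T ∨ ∃ σ, some (.inr (σ, p σ)) ∈ T ∧ Q ⊆ att σ ∧ #Q + 1 = #T) := by
  obtain ⟨p, v₀, hv₀⟩ := exists_copy_mem_of_isClique hT hnone hn
  let Q := univ.filter fun v => some (.inl (p, v)) ∈ T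
  let f : W → GadgetVertex n W := fun v => some (.inl (p, v))
  have hQT : ∀ v ∈ Q, f v ∈ T := fun v hv => (mem_filter.mp hv).2
  have hcardQ : #(Q.image f) = #Q := card_image_of_injective _ (by intro _ _ h; simpa [f] using h)
  have hcopy : ∀ q v, some (.inl (q, v)) ∈ T → q = p := by
    intro q v hv
    by_contra hq
    exact hq (hT hv hv₀ (by simp [hq])).1
  have hterm : ∀ σ i, some (.inr (σ, i)) ∈ T → i = p σ :=
    fun σ i hi => (hT hv₀ hi (by simp)).1.symm
  have hside : ∀ σ τ, some (.inr (σ, p σ)) ∈ T → some (.inr (τ, p τ)) ∈ T → σ = τ := by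
    intro σ τ hσ hτ
    by_contra h
    exact h (hT hσ hτ (by simp [h])).1
  have hmem : ∀ x ∈ T, x ∈ Q.image f ∨ ∃ σ, x = some (.inr (σ, p σ)) := by
    rintro (_ | ⟨q, v⟩ | ⟨σ, i⟩) hx
    · exact absurd hx hnone
    · obtain rfl := hcopy q v hx
      exact .inl (mem_image.mpr ⟨v, mem_filter.mpr ⟨mem_univ _, hx⟩, rfl⟩)
    · exact .inr ⟨σ, by rw [hterm σ i hx]⟩
  refine ⟨p, Q, fun v hv w hw hvw => (hT (hQT v hv) (hQT w hw) (by simpa [f])).2, hQT, ?_⟩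
  by_cases hσ : ∃ σ, some (.inr (σ, p σ)) ∈ T
  · obtain ⟨σ, hσ⟩ := hσ
    have hTeq : T = insert (some (.inr (σ, p σ))) (Q.image f) := by
      refine Subset.antisymm (fun x hx => ?_) (insert_subset hσ (image_subset_iff.mpr hQT))
      rcases hmem x hx with h | ⟨τ, rfl⟩
      · exact mem_insert_of_mem h
      · rw [hside τ σ hx hσ]
        exact mem_insert_self _ _
    refine .inr ⟨σ, hσ, fun v hv => (hT hσ (hQT v hv) (by simp [f])).2, ?_⟩
    rw [congrArg card hTeq, card_insert_of_notMem (by simp [f]), hcardQ]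
  · push Not at hσ
    have hTeq : T = Q.image f := by
      refine Subset.antisymm (fun x hx => ?_) (image_subset_iff.mpr hQT)
      rcases hmem x hx with h | ⟨τ, rfl⟩
      exacts [h, absurd hx (hσ τ)]
    exact .inl (by rw [congrArg card hTeq, hcardQ])

theorem cliqueFree [Fintype W] (hD : D.CliqueFree (n + 2))
    (hatt : ∀ σ, ∀ Q ⊆ att σ, ¬ D.IsNClique (n + 1) Q) : (gadget n D att).CliqueFree (n + 2) := by
  intro T hT
  by_cases hnone : none ∈ T
  · have hterm : ∀ x ∈ T.erase none, ∃ σ i, x = some (.inr (σ, i)) := by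
      rintro (_ | ⟨p, v⟩ | ⟨σ, i⟩) hx
      · simp at hx
      · exact absurd (hT.isClique hnone (mem_of_mem_erase hx) (by simp)) not_adj_none_copy
      · exact ⟨σ, i, rfl⟩
    have := card_le_of_isClique_of_forall_term (hT.isClique.subset (by simp)) hterm
    rw [card_erase_of_mem hnone, hT.card_eq] at this
    omega
  · obtain ⟨p, Q, hQ, -, hcard | ⟨σ, -, hsub, hcard⟩⟩ :=
      exists_copy_of_isClique hT.isClique hnone (by rw [hT.card_eq]; omega)
    · exact hD Q ⟨hQ, hcard.trans hT.card_eq⟩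
    · exact hatt σ Q hsub ⟨hQ, by rw [hT.card_eq] at hcard; omega⟩

theorem isNClique_image_copy {k : ℕ} {Q : Finset W} (hQ : D.IsNClique k Q)
    (p : Fin 2 → Fin n) :
    (gadget n D att).IsNClique k (Q.image fun v => some (.inl (p, v))) := by
  simpa [Copy.toEmbedding, map_eq_image, copyEmbedding] using
    hQ.map_copy_s12 (copyEmbedding (att := att) p).toCopy

theorem isNClique_insert_term {k : ℕ} {Q : Finset W} (hQ : D.IsNClique k Q) {σ : Fin 2}
    (hsub : Q ⊆ att σ) (p : Fin 2 → Fin n) :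
    (gadget n D att).IsNClique (k + 1)
      (insert (some (.inr (σ, p σ))) (Q.image fun v => some (.inl (p, v)))) :=
  (isNClique_image_copy hQ p).insert fun _ hb => by
    obtain ⟨v, hv, rfl⟩ := mem_image.mp hb
    exact ⟨rfl, hsub hv⟩

theorem isNClique_insert_none (σ : Fin 2) :
    (gadget n D att).IsNClique (n + 1) (insert none (univ.image fun i => some (.inr (σ, i)))) := by
  refine IsNClique.insert ⟨fun x hx y hy hxy => ?_, ?_⟩ (by simp)
  · simp only [coe_image, coe_univ, Set.image_univ, Set.mem_range] at hx hy
    obtain ⟨i, rfl⟩ := hx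
    obtain ⟨j, rfl⟩ := hy
    exact ⟨rfl, fun h => hxy (h ▸ rfl)⟩
  · rw [card_image_of_injective _ (by intro _ _ h; simpa using h), card_univ, Fintype.card_fin]

theorem varrows (hforce : ∀ c : W → Fin 2, D.NoMonoClique (n + 1) c → ∀ i,
      ∃ σ, ∃ Q ⊆ att σ, D.IsNClique n Q ∧ ∀ v ∈ Q, c v = i) :
    VArrows (gadget n D att) ![n + 1, n + 1] := by
  refine varrows_pair_iff.mpr fun c => ?_
  by_cases hcopy : ∃ p, ¬ D.NoMonoClique (n + 1) fun v => c (some (.inl (p, v)))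
  · obtain ⟨p, hp⟩ := hcopy
    simp only [NoMonoClique, not_forall, not_exists, not_and, not_not] at hp
    obtain ⟨i, t, ht, hmono⟩ := hp
    exact ⟨i, _, isNClique_image_copy ht p, by simpa using hmono⟩
  push Not at hcopy
  by_cases hpair : ∃ i j, c (some (.inr (0, i))) = c (some (.inr (1, j)))
  · obtain ⟨i, j, hij⟩ := hpair
    obtain ⟨σ, Q, hsub, hQ, hmono⟩ := hforce _ (hcopy ![i, j]) (c (some (.inr (0, i))))
    refine ⟨c (some (.inr (0, i))), _, isNClique_insert_term hQ hsub ![i, j], fun x hx => ?_⟩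
    rcases mem_insert.mp hx with rfl | hx
    · fin_cases σ
      exacts [rfl, hij.symm]
    · obtain ⟨v, hv, rfl⟩ := mem_image.mp hx
      exact hmono v hv
  · push Not at hpair
    by_cases hside : ∀ i, c (some (.inr (0, i))) = c none
    · refine ⟨c none, _, isNClique_insert_none 0, fun x hx => ?_⟩
      rcases mem_insert.mp hx with rfl | hx
      · rfl
      · obtain ⟨i, -, rfl⟩ := mem_image.mp hx
        exact hside i
    · obtain ⟨i, hi⟩ := not_forall.mp hside
      refine ⟨c none, _, isNClique_insert_none 1, fun x hx => ?_⟩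
      rcases mem_insert.mp hx with rfl | hx
      · rfl
      · obtain ⟨j, -, rfl⟩ := mem_image.mp hx
        have := hpair i j
        omega

def coloring (χ : W → Fin 2) : GadgetVertex n W → Fin 2
  | some (.inl (_, v)) => χ v
  | some (.inr (σ, _)) => σ
  | none => 0

theorem not_varrows_induce [Fintype W] {χ : W → Fin 2} (hχ : D.NoMonoClique (n + 1) χ)
    (hatt : ∀ σ, ∀ Q ⊆ att σ, D.IsNClique n Q → ∃ v ∈ Q, χ v ≠ σ) :
    ¬ VArrows ((gadget n D att).induce {x | x ≠ none}) ![n + 1, n + 1] := by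
  refine not_varrows_induce_ne (coloring χ) fun i T hT hnone => ?_
  by_contra! hmono
  obtain ⟨p, Q, hQ, hQT, hcard | ⟨σ, hσ, hsub, hcard⟩⟩ :=
    exists_copy_of_isClique hT.isClique hnone (by rw [hT.card_eq]; omega)
  · obtain ⟨v, hv, hne⟩ := hχ i Q ⟨hQ, hcard.trans hT.card_eq⟩
    exact hne (hmono _ (hQT v hv))
  · obtain rfl : σ = i := hmono _ hσ
    obtain ⟨v, hv, hne⟩ := hatt σ Q hsub ⟨hQ, by rw [hT.card_eq] at hcard; omega⟩
    exact hne (hmono _ (hQT v hv))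

end SimpleGraph.gadget

theorem subset_insert_filter_adj_of_isClique [DecidableEq W] {D : SimpleGraph W}
    {Q M : Finset W} {z : W} (hQ : D.IsClique (Q : Set W)) (hQM : Q ⊆ M) (hzQ : z ∈ Q) :
    Q ⊆ insert z (M.filter (D.Adj z)) := by
  intro v hv
  by_cases hvz : v = z
  · exact hvz ▸ mem_insert_self _ _
  · exact mem_insert_of_mem (mem_filter.mpr ⟨hQM hv, hQ hzQ hv (Ne.symm hvz)⟩)

def SimpleGraph.ForcesMonoClique (D : SimpleGraph W) (n : ℕ) (M : Finset W) : Prop :=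
  ∀ c : W → Fin 2, D.NoMonoClique (n + 1) c →
    ∀ i, ∃ Q ⊆ M, D.IsNClique n Q ∧ ∀ v ∈ Q, c v = i

theorem exists_attachment_sets [Fintype W] [DecidableEq W] {D : SimpleGraph W} {n : ℕ}
    {M : Finset W} {z : W}
    (hM : D.ForcesMonoClique n M) (hMfree : ∀ Q ⊆ M, ¬ D.IsNClique (n + 1) Q) (hz : z ∈ M)
    (hmin : ¬ D.ForcesMonoClique n (M.erase z)) :
    ∃ (att : Fin 2 → Finset W) (χ : W → Fin 2),
      (∀ σ, ∀ Q ⊆ att σ, ¬ D.IsNClique (n + 1) Q) ∧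
      (∀ c : W → Fin 2, D.NoMonoClique (n + 1) c → ∀ i,
        ∃ σ, ∃ Q ⊆ att σ, D.IsNClique n Q ∧ ∀ v ∈ Q, c v = i) ∧
      D.NoMonoClique (n + 1) χ ∧
      (∀ σ, ∀ Q ⊆ att σ, D.IsNClique n Q → ∃ v ∈ Q, χ v ≠ σ) := by
  simp only [ForcesMonoClique, not_forall, not_exists, not_and] at hmin
  obtain ⟨χ, hχ, κ, hκ⟩ := hmin
  have hχz : χ z = κ := by
    obtain ⟨Q, hQM, hQ, hmono⟩ := hM χ hχ κ
    by_contra hne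
    have hzQ : z ∉ Q := fun h => hne (hmono z h)
    obtain ⟨v, hv, hvκ⟩ := hκ Q (subset_erase.mpr ⟨hQM, hzQ⟩) hQ
    exact hvκ (hmono v hv)
  let Y := insert z (M.filter (D.Adj z))
  have hYM : Y ⊆ M := insert_subset hz (filter_subset _ _)
  have hYz : ∀ Q ⊆ Y, D.IsNClique n Q → z ∈ Q := by
    intro Q hQY hQ
    by_contra hzQ
    have hQN : Q ⊆ M.filter (D.Adj z) := (subset_insert_iff_of_notMem hzQ).mp hQY
    exact hMfree (insert z Q) (insert_subset hz (hQN.trans (filter_subset _ _)))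
      (hQ.insert fun v hv => (mem_filter.mp (hQN hv)).2)
  obtain ⟨κ', hκ'⟩ : ∃ κ' : Fin 2, κ' ≠ κ := ⟨κ + 1, by fin_cases κ <;> decide⟩
  let att : Fin 2 → Finset W := fun σ => if σ = κ then M.erase z else Y
  have hattM : ∀ σ, att σ ⊆ M := fun σ => by
    by_cases hσ : σ = κ
    · simpa [att, hσ] using erase_subset z M
    · simpa [att, hσ] using hYM
  refine ⟨att, χ, fun σ Q hQ => hMfree Q (hQ.trans (hattM σ)), fun c hc i => ?_, hχ, ?_⟩
  · obtain ⟨Q, hQM, hQ, hmono⟩ := hM c hc i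
    by_cases hzQ : z ∈ Q
    · exact ⟨κ', Q, by simpa [att, hκ'] using
        subset_insert_filter_adj_of_isClique hQ.isClique hQM hzQ, hQ, hmono⟩
    · exact ⟨κ, Q, by simpa [att] using subset_erase.mpr ⟨hQM, hzQ⟩, hQ, hmono⟩
  · intro σ Q hQatt hQ
    by_cases hσ : σ = κ
    · subst hσ
      simpa using hκ Q (by simpa [att] using hQatt) hQ
    · exact ⟨z, hYz Q (by simpa [att, hσ] using hQatt) hQ, hχz.trans_ne (Ne.symm hσ)⟩

theorem forcesMonoClique_neighbors [Fintype V] {G : SimpleGraph V} {n : ℕ} {w : V}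
    (h : VArrows G ![n + 1, n + 1]) :
    (G.induce {x | x ≠ w}).ForcesMonoClique n (univ.filter fun x => G.Adj w x) := by
  intro c hc i
  let f : V → Fin 2 := fun x => if hx : x = w then i else c ⟨x, hx⟩
  obtain ⟨j, T, hT, hmono⟩ := varrows_pair_iff.mp h f
  have hw := mem_of_isNClique_of_noMonoClique_induce hc (fun x hx => dif_neg hx) hT hmono
  have hij : i = j := by simpa [f] using hmono w hw
  have hsub : ∀ x ∈ T.erase w, x ∈ {x | x ≠ w} := fun x hx => ne_of_mem_erase hx
  refine ⟨(T.erase w).subtype (· ∈ {x | x ≠ w}), fun x hx => ?_, ?_, fun x hx => ?_⟩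
  · have hxT := mem_subtype.mp hx
    simpa using hT.isClique hw (mem_of_mem_erase hxT) (ne_of_mem_erase hxT).symm
  · rw [isNClique_induce_iff, subtype_map_of_mem hsub]
    exact hT.erase_of_mem hw
  · have hxw : (x : V) ≠ w := x.prop
    simpa [f, hxw, hij] using hmono x (mem_of_mem_erase (mem_subtype.mp hx))

theorem not_isNClique_of_subset_neighbors [Fintype V] {G : SimpleGraph V} {n : ℕ} {w : V}
    (hfree : G.CliqueFree (n + 2)) {Q : Finset {x | x ≠ w}}
    (hQ : Q ⊆ univ.filter fun x => G.Adj w x) : ¬ (G.induce {x | x ≠ w}).IsNClique (n + 1) Q := by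
  rw [isNClique_induce_iff]
  refine fun h => hfree _ (h.insert (a := w) fun b hb => ?_)
  obtain ⟨x, hx, rfl⟩ := mem_map.mp hb
  simpa using hQ hx

theorem exists_gadget [Fintype V] {G : SimpleGraph V} {n : ℕ} (hn : 1 ≤ n)
    (hfree : G.CliqueFree (n + 2)) (harr : VArrows G ![n + 1, n + 1]) {w : V}
    (hw : ¬ VArrows (G.induce {x | x ≠ w}) ![n + 1, n + 1]) :
    ∃ att : Fin 2 → Finset {x | x ≠ w},
      (gadget n (G.induce {x | x ≠ w}) att).CliqueFree (n + 2) ∧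
      VArrows (gadget n (G.induce {x | x ≠ w}) att) ![n + 1, n + 1] ∧
      ¬ VArrows ((gadget n (G.induce {x | x ≠ w}) att).induce {x | x ≠ none}) ![n + 1, n + 1] := by
  obtain ⟨χ₀, hχ₀⟩ := not_varrows_pair_iff.mp hw
  obtain ⟨M, hMN, hmin⟩ := exists_minimal_le_of_wellFoundedLT
    ((G.induce {x | x ≠ w}).ForcesMonoClique n) _ (forcesMonoClique_neighbors harr)
  obtain ⟨z, hz⟩ : M.Nonempty := by
    obtain ⟨Q, hQM, hQ, -⟩ := hmin.prop χ₀ hχ₀ 0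
    exact (card_pos.mp (by rw [hQ.card_eq]; omega)).mono hQM
  obtain ⟨att, χ, hatt, hforce, hχ, hχatt⟩ := exists_attachment_sets hmin.prop
    (fun Q hQ => not_isNClique_of_subset_neighbors hfree (hQ.trans hMN)) hz
    (hmin.not_prop_of_lt (erase_ssubset hz))
  exact ⟨att, gadget.cliqueFree (hfree.comap (Embedding.induce _).isContained) hatt,
    gadget.varrows hforce, gadget.not_varrows_induce hχ hχatt⟩

end

/-- If there exists some `K_{s+1}`-free graph `H` with `H → (s,s)ᵛ`, then there
exists a `K_{s+1}`-free graph `G` of minimum degree exactly `2s-2` such that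
`G → (s,s)ᵛ` and `G - u ↛ (s,s)ᵛ` for every vertex `u` of `G`. -/
theorem stmt_12 (s k : ℕ) (hs : 3 ≤ s) (H : SimpleGraph (Fin k))
    (hHfree : H.CliqueFree (s + 1)) (hHarr : VArrows H ![s, s]) :
    ∃ (m : ℕ) (G : SimpleGraph (Fin m)),
      G.CliqueFree (s + 1) ∧
      G.minDegree = 2 * s - 2 ∧
      VArrows G ![s, s] ∧
      ∀ u : Fin m, ¬ VArrows (G.induce {v : Fin m | v ≠ u}) ![s, s] := by
  obtain ⟨n, rfl⟩ : ∃ n, s = n + 1 := ⟨s - 1, by omega⟩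
  obtain ⟨S₀, ⟨harr₀, hcrit₀⟩, -⟩ := exists_isVArrowsCritical_induce hHarr
  obtain ⟨-, t, ht, -⟩ := varrows_pair_iff.mp harr₀ fun _ => 0
  obtain ⟨w, -⟩ := card_pos.mp (by rw [ht.card_eq]; omega)
  obtain ⟨att, hfree, harr, hnot⟩ := exists_gadget (by omega)
    (hHfree.comap (Embedding.induce _).isContained) harr₀ (hcrit₀ w)
  obtain ⟨S, hS, hnone⟩ := exists_isVArrowsCritical_induce harr
  refine exists_fin_of_isVArrowsCritical hS (hfree.comap (Copy.induce _ _).isContained)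
    (u := ⟨none, hnone none hnot⟩) ?_
  exact ((Copy.induce _ S).degree_le _).trans_eq gadget.degree_none
end

section
/- Let s ≥ 3 and let G be a (2s−2)-regular finite simple graph with G → (s, s)^v. Then χ(G) = 2s−1. -/
namespace SimpleGraph

variable {V α : Type*} {G : SimpleGraph V}

section Greedy

variable [Fintype V] [DecidableRel G.Adj] {n : ℕ}

lemma exists_forall_adj_ne_of_degree_lt (f : V → Fin n) {v : V} (hv : G.degree v < n) :
    ∃ c, ∀ w, G.Adj v w → f w ≠ c := by
  by_contra! h
  have hsub : (Finset.univ : Finset (Fin n)) ⊆ (G.neighborFinset v).image f := fun c _ ↦ by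
    obtain ⟨w, hvw, rfl⟩ := h c
    exact Finset.mem_image_of_mem f ((G.mem_neighborFinset v w).2 hvw)
  have := (Finset.card_le_card hsub).trans Finset.card_image_le
  rw [Finset.card_univ, Fintype.card_fin, card_neighborFinset_eq_degree] at this
  omega

lemma exists_properOn_of_degree_lt (hdeg : ∀ v, G.degree v < n) (s : Finset V) :
    ∃ f : V → Fin n, ∀ v ∈ s, ∀ w ∈ s, G.Adj v w → f v ≠ f w := by
  classical
  induction s using Finset.induction_on with
  | empty => exact ⟨fun v ↦ ⟨0, (Nat.zero_le _).trans_lt (hdeg v)⟩, by simp⟩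
  | insert a s _ ih =>
    obtain ⟨f, hf⟩ := ih
    obtain ⟨c, hc⟩ := exists_forall_adj_ne_of_degree_lt f (hdeg a)
    refine ⟨Function.update f a c, fun v hv w hw hvw ↦ ?_⟩
    rw [Finset.mem_insert] at hv hw
    rcases eq_or_ne v a with rfl | hva
    · rw [Function.update_self, Function.update_of_ne (G.ne_of_adj hvw).symm]
      exact (hc w hvw).symm
    rcases eq_or_ne w a with rfl | hwa
    · rw [Function.update_self, Function.update_of_ne hva]
      exact hc v hvw.symm
    rw [Function.update_of_ne hva, Function.update_of_ne hwa]
    exact hf v (hv.resolve_left hva) w (hw.resolve_left hwa) hvw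

theorem colorable_of_degree_lt (hdeg : ∀ v, G.degree v < n) : G.Colorable n := by
  obtain ⟨f, hf⟩ := exists_properOn_of_degree_lt hdeg Finset.univ
  exact ⟨Coloring.mk f fun hvw ↦ hf _ (Finset.mem_univ _) _ (Finset.mem_univ _) hvw⟩

end Greedy

lemma IsClique.card_le_of_forall_mem {t : Finset V} (ht : G.IsClique t) (C : G.Coloring α)
    {S : Finset α} (hS : ∀ v ∈ t, C v ∈ S) : t.card ≤ S.card :=
  Finset.card_le_card_of_injOn C hS fun v hv w hw hC ↦ by
    by_contra hvw
    exact C.valid (ht hv hw hvw) hC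

theorem not_colorable_of_vArrows {m n : ℕ} (h : VArrows G ![m + 1, n + 1]) :
    ¬ G.Colorable (m + n) := by
  intro hG
  let C : G.Coloring (Fin m ⊕ Fin n) := hG.toColoring (by simp)
  obtain ⟨i, t, ht, hcol⟩ := h fun v ↦ Sum.elim (fun _ ↦ 0) (fun _ ↦ 1) (C v)
  fin_cases i
  · have := ht.isClique.card_le_of_forall_mem C (S := Finset.univ.map .inl) fun v hv ↦ by
      have := hcol v hv
      cases hC : C v <;> simp_all
    simp [ht.card_eq] at this
  · have := ht.isClique.card_le_of_forall_mem C (S := Finset.univ.map .inr) fun v hv ↦ by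
      have := hcol v hv
      cases hC : C v <;> simp_all
    simp [ht.card_eq] at this

end SimpleGraph

open SimpleGraph in
/-- If `s ≥ 3` and `G` is a `(2s-2)`-regular finite graph with `G → (s,s)ᵛ`,
then `χ(G) = 2s-1`. -/
theorem stmt_13 {V : Type*} [Fintype V] (s : ℕ) (hs : 3 ≤ s)
    (G : SimpleGraph V) [DecidableRel G.Adj]
    (hreg : G.IsRegularOfDegree (2 * s - 2))
    (hGarr : VArrows G ![s, s]) :
    G.chromaticNumber = ((2 * s - 1 : ℕ) : ℕ∞) := by
  obtain ⟨k, rfl⟩ : ∃ k, s = k + 1 := ⟨s - 1, by omega⟩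
  have hcol : G.Colorable (2 * (k + 1) - 1) :=
    colorable_of_degree_lt fun v ↦ by rw [hreg v]; omega
  have hncol : ¬ G.Colorable (k + k) := not_colorable_of_vArrows hGarr
  refine le_antisymm (chromaticNumber_le_iff_colorable.2 hcol)
    (le_chromaticNumber_iff_colorable.2 fun m hm ↦ ?_)
  by_contra! hlt
  exact hncol (hm.mono (by omega))
end
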